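/- arXiv:1611.04035 — 9 statements merged into one kernel-verified Lean document; each statement's English description precedes it below -/
import Mathlib

section
/- For any pair of discrete random variables X and Y with finite supports 𝒳 and 𝒴 and arbitrary joint distribution p(x,y), there exist a causal model M₁ = ({X,Y}, E, f, X→Y) with E independent of X and Y = f(X,E), and a causal model M₂ = ({X,Y}, Ẽ, g, Y→X) with Ẽ independent of Y and X = g(Y,Ẽ), both inducing the same joint distribution p(x,y). In other words, without further assumptions the causal direction between two discrete variables is unidentifiable from their joint distribution. -/
/-- `(pE, f)` is a causal model in direction `X → Y` for the joint distribution `p` on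
`α × β`:  `pE` is the distribution of a finite exogenous variable `E` independent of `X`,
and `Y = f(X, E)`, so that `p x y = P(X = x) · P(f(x, E) = y)`. -/
def IsCausalModel {α β γ : Type*} [Fintype α] [Fintype β] [Fintype γ] [DecidableEq β]
    (p : α → β → ℝ) (pE : γ → ℝ) (f : α → γ → β) : Prop :=
  (∀ e, 0 ≤ pE e) ∧ (∑ e, pE e = 1) ∧
    ∀ x y, p x y = (∑ y', p x y') * ∑ e, if f x e = y then pE e else 0

/-- Transfer a causal model from an arbitrary finite exogenous type `γ` to `Fin m`. -/
lemma causal_model_toFin {α β γ : Type*} [Fintype α] [Fintype β] [Fintype γ]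
    [DecidableEq β] (p : α → β → ℝ) (pE : γ → ℝ) (f : α → γ → β)
    (h : IsCausalModel p pE f) :
    ∃ (m : ℕ) (pE' : Fin m → ℝ) (f' : α → Fin m → β), IsCausalModel p pE' f' := by
  obtain ⟨h1, h2, h3⟩ := h
  refine ⟨Fintype.card γ, fun i => pE ((Fintype.equivFin γ).symm i),
    fun x i => f x ((Fintype.equivFin γ).symm i), fun i => h1 _, ?_, ?_⟩
  · rw [← h2]; exact Fintype.sum_equiv (Fintype.equivFin γ).symm _ _ (fun _ => rfl)
  · intro x y
    rw [h3 x y]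
    have h4 : (∑ i : Fin (Fintype.card γ),
        if f x ((Fintype.equivFin γ).symm i) = y then pE ((Fintype.equivFin γ).symm i) else 0)
        = ∑ e, if f x e = y then pE e else 0 :=
      Fintype.sum_equiv (Fintype.equivFin γ).symm _ _ (fun _ => rfl)
    rw [h4]

/-- A causal model in direction `X → Y` always exists. -/
lemma exists_causal_model {α β : Type*} [Fintype α] [Fintype β] [DecidableEq α]
    [DecidableEq β] (p : α → β → ℝ) (hnn : ∀ x y, 0 ≤ p x y)
    (hsum : ∑ x, ∑ y, p x y = 1) :
    ∃ (m : ℕ) (pE : Fin m → ℝ) (f : α → Fin m → β), IsCausalModel p pE f := by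
  -- β is nonempty
  have hβ : Nonempty β := by
    rcases isEmpty_or_nonempty β with h | h
    · simp at hsum
    · exact h
  have hcard : (0:ℝ) < (Fintype.card β : ℝ) := by
    exact_mod_cast Fintype.card_pos
  set px : α → ℝ := fun x => ∑ y, p x y with hpx
  have hpxnn : ∀ x, 0 ≤ px x := fun x => Finset.sum_nonneg (fun y _ => hnn x y)
  -- conditional distribution
  set q : α → β → ℝ := fun x y =>
    if px x = 0 then ((Fintype.card β : ℝ))⁻¹ else p x y / px x with hq
  have hqnn : ∀ x y, 0 ≤ q x y := by
    intro x y
    by_cases h : px x = 0 <;> simp only [hq, h, if_true, if_false, if_pos, if_neg]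
    · positivity
    · exact div_nonneg (hnn x y) (hpxnn x)
  have hqsum : ∀ x, ∑ y, q x y = 1 := by
    intro x
    by_cases h : px x = 0
    · simp only [hq, h, if_true]
      rw [Finset.sum_const, Finset.card_univ, nsmul_eq_mul]
      field_simp
    · simp only [hq, h, if_false]
      rw [← Finset.sum_div]
      exact div_self h
  have hpq : ∀ x y, p x y = px x * q x y := by
    intro x y
    by_cases h : px x = 0
    · have h0 : p x y = 0 := by
        have := Finset.sum_eq_zero_iff_of_nonneg (fun y _ => hnn x y) |>.mp h
        exact this y (Finset.mem_univ y)
      rw [h0, h, zero_mul]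
    · simp only [hq, h, if_false]
      rw [mul_div_cancel₀ _ h]
  -- the exogenous variable: a random function α → β
  refine causal_model_toFin p (fun φ : α → β => ∏ x, q x (φ x)) (fun x φ => φ x)
    ⟨fun φ => Finset.prod_nonneg (fun x _ => hqnn x (φ x)), ?_, ?_⟩
  · rw [← Fintype.prod_sum (fun x y => q x y)]
    simp [hqsum]
  · intro x y
    -- key: ∑ over φ with φ x = y of ∏ q equals q x y
    have key : (∑ φ : α → β, if φ x = y then ∏ x', q x' (φ x') else 0) = q x y := by
      set g : α → β → ℝ := fun x' y' =>
        if x' = x then (if y' = y then q x y' else 0) else q x' y' with hg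
      have stepA : ∀ φ : α → β,
          (if φ x = y then ∏ x', q x' (φ x') else 0) = ∏ x', g x' (φ x') := by
        intro φ
        by_cases h : φ x = y
        · rw [if_pos h]
          refine Finset.prod_congr rfl (fun x' _ => ?_)
          by_cases hx : x' = x
          · subst hx; simp [hg, h]
          · simp [hg, hx]
        · rw [if_neg h]
          refine (Finset.prod_eq_zero (Finset.mem_univ x) ?_).symm
          simp [hg, h]
      calc (∑ φ : α → β, if φ x = y then ∏ x', q x' (φ x') else 0)
          = ∑ φ : α → β, ∏ x', g x' (φ x') := by
            exact Finset.sum_congr rfl (fun φ _ => stepA φ)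
        _ = ∏ x', ∑ y', g x' y' := (Fintype.prod_sum g).symm
        _ = q x y := by
            rw [Finset.prod_eq_single x]
            · simp [hg]
            · intro x' _ hx'
              simp only [hg, if_neg hx']
              exact hqsum x'
            · intro h; exact absurd (Finset.mem_univ x) h
    rw [key]
    exact hpq x y

/-- **Unidentifiability without assumptions.**  For any joint distribution `p(x,y)` of two
finite discrete random variables there are causal models in both directions:
a model `Y = f(X, E)` with `E ⟂ X` and a model `X = g(Y, Ẽ)` with `Ẽ ⟂ Y`, both inducing
the joint distribution `p`. -/
theorem unidentifiability_without_assumptions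
    {α β : Type*} [Fintype α] [Fintype β] [DecidableEq α] [DecidableEq β]
    (p : α → β → ℝ) (hnn : ∀ x y, 0 ≤ p x y) (hsum : ∑ x, ∑ y, p x y = 1) :
    (∃ (m : ℕ) (pE : Fin m → ℝ) (f : α → Fin m → β), IsCausalModel p pE f) ∧
    (∃ (m : ℕ) (pE : Fin m → ℝ) (g : β → Fin m → α),
      IsCausalModel (fun y x => p x y) pE g) := by
  constructor
  · exact exists_causal_model p hnn hsum
  · refine exists_causal_model (fun y x => p x y) (fun y x => hnn x y) ?_
    rw [Finset.sum_comm]; exact hsum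
end

section
/- Let X and Y be discrete random variables each taking values in [n] = {1,…,n} with joint distribution p(x,y) such that p(x)>0 for all x. Then there exists a causal model M = ({X,Y}, E, f, X→Y) with E independent of X, Y = f(X,E), and E supported on a set of cardinality m, if and only if there exist a block partition matrix M ∈ {0,1}^{n²×m} and a vector e ∈ ℝ₊^m with ∑ᵢ e(i) = 1 such that vec(P_{Y|X}) = M e, where P_{Y|X} is the n×n conditional probability matrix with P_{Y|X}(i,j) = p(Y=i | X=j) and vec stacks its columns. -/
/-- **Characterization of causal models via block partition matrices.**
For a joint distribution `p(x,y)` on `[n] × [n]` with `p(x) > 0` for all `x`, there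
exists a causal model `Y = f(X,E)`, `E ⟂ X`, with `E` supported on a set of
cardinality `m` if and only if there exist a block partition matrix
`M ∈ {0,1}^{n²×m}` (rows indexed by pairs `(i,j)`, and for each `j` the blocks
`S_{1,j},…,S_{n,j}` with `S_{i,j} = {k : M i j k ≠ 0}` partition `[m]`, encoded below by
"for every `j` and `k` there is exactly one `i` with `M i j k = 1`") and a nonnegative
vector `e ∈ ℝ₊^m` summing to `1` such that `vec(P_{Y|X}) = M e`, i.e.
`p(Y=i | X=j) = ∑ₖ M i j k · e(k)` for all `i, j`. -/
theorem causal_model_iff_block_partition_matrix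
    (n m : ℕ) (p : Fin n → Fin n → ℝ)
    (hnn : ∀ x y, 0 ≤ p x y) (hsum : ∑ x, ∑ y, p x y = 1)
    (hpos : ∀ x, 0 < ∑ y, p x y) :
    (∃ (pE : Fin m → ℝ) (f : Fin n → Fin m → Fin n), IsCausalModel p pE f) ↔
    (∃ (M : Fin n → Fin n → Fin m → ℝ) (e : Fin m → ℝ),
      (∀ i j k, M i j k = 0 ∨ M i j k = 1) ∧
      (∀ j k, ∃! i, M i j k = 1) ∧
      (∀ k, 0 ≤ e k) ∧ (∑ k, e k = 1) ∧
      (∀ i j, p j i / (∑ y, p j y) = ∑ k, M i j k * e k)) := by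
  constructor
  · rintro ⟨pE, f, hnnE, hsumE, hmodel⟩
    refine ⟨fun i j k => if f j k = i then 1 else 0, pE, ?_, ?_, hnnE, hsumE, ?_⟩
    · intro i j k; by_cases h : f j k = i <;> simp [h]
    · intro j k
      refine ⟨f j k, by simp, fun i hi => ?_⟩
      by_contra h
      simp [Ne.symm h] at hi
    · intro i j
      rw [hmodel j i, mul_comm, mul_div_assoc, div_self (hpos j).ne', mul_one]
      apply Finset.sum_congr rfl
      intro k _
      by_cases h : f j k = i <;> simp [h]
  · rintro ⟨M, e, h01, huniq, hnnE, hsumE, heq⟩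
    refine ⟨e, fun j k => (huniq j k).choose, hnnE, hsumE, ?_⟩
    intro x y
    have key : (∑ k, if (huniq x k).choose = y then e k else 0) = ∑ k, M y x k * e k := by
      apply Finset.sum_congr rfl
      intro k _
      obtain ⟨hc, hu⟩ := (huniq x k).choose_spec
      by_cases h : (huniq x k).choose = y
      · rw [if_pos h, ← h, hc, one_mul]
      · rw [if_neg h]
        rcases h01 y x k with h0 | h1
        · rw [h0, zero_mul]
        · exact absurd (hu y h1).symm h
    rw [key, ← heq y x, mul_div_cancel₀ _ (hpos x).ne']
end

section
/- Let X ∈ 𝒳 and Y ∈ 𝒴 be discrete random variables with joint distribution p(x,y), where |𝒳| = |𝒴| = n. Then there exists a causal model Y = f(X,E) with E independent of X that induces p(x,y), in which the exogenous variable E has support of cardinality at most n(n−1)+1. -/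
/-!
Fix an enumeration of `𝒴` and let `F_x` be the cumulative distribution function of the
conditional law `p(· | x)`. The interior values `F_x(1), …, F_x(n-1)` of all `n` of these
functions, together with `0` and `1`, cut `[0, 1]` into at most `n(n-1)+1` intervals. Let `E`
be the interval containing a uniform random variable `U`, and `f(x, E)` the quantile of `F_x`
at `U`: it is constant on each interval, so it depends on `E` only, and `f(x, E)` has law
`p(· | x)`.
-/

open Finset

namespace Fin

variable {m n : ℕ}

theorem sum_filter_succ_le_sub {M : Type*} [AddCommGroup M] (s : Fin (m + 1) → M)
    (c : Fin (m + 1)) : ∑ i : Fin m with i.succ ≤ c, (s i.succ - s i.castSucc) = s c - s 0 := by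
  cases c using Fin.cases with
  | zero => simp [succ_ne_zero]
  | succ k =>
    rw [← sum_Iic_sub k s]
    congr 1
    ext i
    simp

theorem sum_filter_succ_mem_Ioc_sub {M : Type*} [AddCommGroup M] (s : Fin (m + 1) → M)
    {a b : Fin (m + 1)} (hab : a ≤ b) :
    ∑ i : Fin m with i.succ ∈ Set.Ioc a b, (s i.succ - s i.castSucc) = s b - s a := by
  have hsub : univ.filter (fun i : Fin m => i.succ ≤ a) ⊆ univ.filter (fun i => i.succ ≤ b) :=
    monotone_filter_right univ fun _ _ h => h.trans hab
  calc ∑ i : Fin m with i.succ ∈ Set.Ioc a b, (s i.succ - s i.castSucc)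
      = ∑ i ∈ univ.filter (fun i : Fin m => i.succ ≤ b) \ univ.filter (fun i => i.succ ≤ a),
          (s i.succ - s i.castSucc) := by
        congr 1
        ext i
        simp [and_comm]
    _ = s b - s a := by
        rw [sum_sdiff_eq_sub hsub, sum_filter_succ_le_sub, sum_filter_succ_le_sub,
          sub_sub_sub_cancel_right]

theorem exists_castSucc_lt_le {α : Type*} [LinearOrder α] {F : Fin (n + 1) → α} {u : α}
    (h0 : F 0 < u) (hlast : u ≤ F (last n)) : ∃ j : Fin n, F j.castSucc < u ∧ u ≤ F j.succ := by
  set S : Finset (Fin (n + 1)) := {k | u ≤ F k}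
  have hS : S.Nonempty := ⟨last n, by simpa [S] using hlast⟩
  have hmin : u ≤ F (S.min' hS) := by simpa [S] using S.min'_mem hS
  obtain ⟨j, hj⟩ := exists_succ_eq (x := S.min' hS) |>.2 fun h => by
    rw [h] at hmin
    exact hmin.not_gt h0
  refine ⟨j, lt_of_not_ge fun h => ?_, hj ▸ hmin⟩
  have := S.min'_le j.castSucc (by simpa [S] using h)
  exact (hj ▸ this).not_gt castSucc_lt_succ

theorem eq_of_castSucc_lt_le {α : Type*} [Preorder α] {F : Fin (n + 1) → α} (hF : Monotone F)
    {u : α} {j k : Fin n} (hj : F j.castSucc < u ∧ u ≤ F j.succ)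
    (hk : F k.castSucc < u ∧ u ≤ F k.succ) : j = k := by
  have key : ∀ {j k : Fin n}, F j.castSucc < u → u ≤ F k.succ → ¬ k < j := fun hj hk hkj =>
    (hk.trans (hF (succ_le_castSucc_iff.2 hkj))).not_gt hj
  exact le_antisymm (not_lt.1 (key hj.1 hk.2)) (not_lt.1 (key hk.1 hj.2))

theorem partialSum_last {M : Type*} [AddCommMonoid M] (f : Fin n → M) :
    partialSum f (last n) = ∑ i, f i := by
  rw [partialSum, val_last, List.take_of_length_le (by simp), List.sum_ofFn]

theorem monotone_partialSum {M : Type*} [AddCommMonoid M] [PartialOrder M] [IsOrderedAddMonoid M]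
    {f : Fin n → M} (hf : ∀ i, 0 ≤ f i) : Monotone (partialSum f) :=
  monotone_iff_le_succ.2 fun i => by rw [partialSum_succ]; exact le_add_of_nonneg_right (hf i)

end Fin

theorem mem_stdSimplex_of_monotone {m : ℕ} {s : Fin (m + 1) → ℝ} (hs : Monotone s)
    (h0 : s 0 = 0) (hlast : s (Fin.last m) = 1) :
    (fun i : Fin m => s i.succ - s i.castSucc) ∈ stdSimplex ℝ (Fin m) := by
  refine ⟨fun i => sub_nonneg.2 (hs Fin.castSucc_lt_succ.le), ?_⟩
  have hall : ∀ i : Fin m, i.succ ∈ Set.Ioc 0 (Fin.last m) :=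
    fun i => ⟨Fin.succ_pos i, Fin.le_last _⟩
  have := Fin.sum_filter_succ_mem_Ioc_sub s (Fin.zero_le (Fin.last m))
  rwa [filter_true_of_mem fun i _ => hall i, h0, hlast, sub_zero] at this

theorem exists_fiber_sum_eq {α : Type*} [AddCommGroup α] [LinearOrder α] {m n : ℕ}
    {s : Fin (m + 1) → α} (hs : StrictMono s) {F : Fin (n + 1) → α} (hF : Monotone F)
    (h0 : F 0 = s 0) (hlast : F (Fin.last n) = s (Fin.last m)) (hFs : ∀ k, F k ∈ Set.range s) :
    ∃ g : Fin m → Fin n, ∀ j,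
      ∑ i, (if g i = j then s i.succ - s i.castSucc else 0) = F j.succ - F j.castSucc := by
  have hcross : ∀ i : Fin m, ∃ j : Fin n, F j.castSucc < s i.succ ∧ s i.succ ≤ F j.succ :=
    fun i => Fin.exists_castSucc_lt_le (h0 ▸ hs (Fin.succ_pos i))
      (hlast ▸ hs.monotone (Fin.le_last _))
  choose g hg using hcross
  refine ⟨g, fun j => ?_⟩
  obtain ⟨a, ha⟩ := hFs j.castSucc
  obtain ⟨b, hb⟩ := hFs j.succ
  have hfiber : ∀ i, g i = j ↔ i.succ ∈ Set.Ioc a b := fun i => by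
    rw [Set.mem_Ioc, ← hs.lt_iff_lt, ← hs.le_iff_le, ha, hb]
    exact ⟨fun h => h ▸ hg i, Fin.eq_of_castSucc_lt_le hF (hg i)⟩
  have hab : a ≤ b := hs.le_iff_le.1 (ha ▸ hb ▸ hF Fin.castSucc_lt_succ.le)
  simp_rw [hfiber]
  rw [← sum_filter, Fin.sum_filter_succ_mem_Ioc_sub s hab, ha, hb]

theorem Finset.exists_strictMono_range_eq_of_subset_Icc (T : Finset ℝ)
    (hT : (T : Set ℝ) ⊆ Set.Icc 0 1) (h0 : 0 ∈ T) (h1 : 1 ∈ T) :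
    ∃ m, #T = m + 1 ∧ ∃ s : Fin (m + 1) → ℝ,
      StrictMono s ∧ Set.range s = T ∧ s 0 = 0 ∧ s (Fin.last m) = 1 := by
  obtain ⟨m, hm⟩ := Nat.exists_eq_add_one.2 (card_pos.2 ⟨0, h0⟩)
  refine ⟨m, hm, T.orderEmbOfFin hm, (T.orderEmbOfFin hm).strictMono, range_orderEmbOfFin _ _,
    ?_, ?_⟩
  · rw [← Fin.mk_zero, orderEmbOfFin_zero hm m.succ_pos]
    exact le_antisymm (min'_le T 0 h0) (hT (min'_mem _ _)).1
  · rw [show Fin.last m = ⟨m + 1 - 1, by omega⟩ from Fin.ext (by simp),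
      orderEmbOfFin_last hm m.succ_pos]
    exact le_antisymm (hT (max'_mem _ _)).2 (le_max' T 1 h1)

theorem exists_common_grid {ι : Type*} [Fintype ι] {n : ℕ} (F : ι → Fin (n + 1) → ℝ)
    (hF : ∀ x, Monotone (F x)) (hF0 : ∀ x, F x 0 = 0) (hFlast : ∀ x, F x (Fin.last n) = 1) :
    ∃ m ≤ Fintype.card ι * (n - 1) + 1, ∃ s : Fin (m + 1) → ℝ,
      StrictMono s ∧ s 0 = 0 ∧ s (Fin.last m) = 1 ∧ ∀ x k, F x k ∈ Set.range s := by
  -- the interior values `F x 1, …, F x (n - 1)`, indexed by `Fin (n - 1)`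
  set T : Finset ℝ := {0, 1} ∪ univ.image fun p : ι × Fin (n - 1) => F p.1 ⟨p.2 + 1, by omega⟩
  have hTcard : #T ≤ 2 + Fintype.card ι * (n - 1) :=
    (card_union_le _ _).trans (add_le_add card_le_two (card_image_le.trans (by simp)))
  have hT : (T : Set ℝ) ⊆ Set.Icc 0 1 := by
    intro t ht
    simp only [T, coe_union, Set.mem_union, coe_insert, coe_singleton, Set.mem_insert_iff,
      Set.mem_singleton_iff, coe_image, Set.mem_image, coe_univ, Set.mem_univ, true_and] at ht
    rcases ht with (rfl | rfl) | ⟨⟨x, k⟩, rfl⟩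
    · norm_num
    · norm_num
    · exact ⟨hF0 x ▸ hF x (Fin.zero_le _), hFlast x ▸ hF x (Fin.le_last _)⟩
  have hFT : ∀ x k, F x k ∈ T := by
    intro x k
    rcases Fin.eq_zero_or_eq_succ k with rfl | ⟨j, rfl⟩
    · simp [T, hF0]
    by_cases hj : (j : ℕ) + 1 = n
    · rw [show j.succ = Fin.last n from Fin.ext hj, hFlast]
      simp [T]
    · exact mem_union_right _ (mem_image.2 ⟨(x, ⟨j, by omega⟩), mem_univ _, rfl⟩)
  obtain ⟨m, hm, s, hs, hrange, hs0, hslast⟩ :=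
    T.exists_strictMono_range_eq_of_subset_Icc hT (by simp [T]) (by simp [T])
  exact ⟨m, by omega, s, hs, hs0, hslast, fun x k => hrange ▸ hFT x k⟩

theorem exists_common_coupling {ι β : Type*} [Fintype ι] [Fintype β] [DecidableEq β]
    (q : ι → β → ℝ) (hq : ∀ x, q x ∈ stdSimplex ℝ β) :
    ∃ m ≤ Fintype.card ι * (Fintype.card β - 1) + 1, ∃ (pE : Fin m → ℝ) (f : ι → Fin m → β),
      pE ∈ stdSimplex ℝ (Fin m) ∧ ∀ x y, ∑ e, (if f x e = y then pE e else 0) = q x y := by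
  let σ := Fintype.equivFin β
  let F : ι → Fin (Fintype.card β + 1) → ℝ := fun x => Fin.partialSum (q x ∘ σ.symm)
  have hF : ∀ x, Monotone (F x) := fun x => Fin.monotone_partialSum fun j => (hq x).1 _
  have hF0 : ∀ x, F x 0 = 0 := fun x => Fin.partialSum_zero _
  have hFlast : ∀ x, F x (Fin.last _) = 1 := fun x => by
    rw [show F x (Fin.last _) = _ from Fin.partialSum_last _, ← (hq x).2]
    exact σ.symm.sum_comp (q x)
  obtain ⟨m, hm, s, hs, hs0, hslast, hFs⟩ := exists_common_grid F hF hF0 hFlast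
  have hg : ∀ x, ∃ g : Fin m → Fin (Fintype.card β), ∀ j,
      ∑ i, (if g i = j then s i.succ - s i.castSucc else 0) = F x j.succ - F x j.castSucc :=
    fun x => exists_fiber_sum_eq hs (hF x) (by rw [hF0, hs0]) (by rw [hFlast, hslast]) (hFs x)
  choose g hg using hg
  refine ⟨m, hm, _, fun x => σ.symm ∘ g x, mem_stdSimplex_of_monotone hs.monotone hs0 hslast,
    fun x y => ?_⟩
  simp_rw [Function.comp_apply, Equiv.symm_apply_eq, hg x, F, Fin.partialSum_succ,
    add_sub_cancel_left, Function.comp_apply, Equiv.symm_apply_apply]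

theorem exists_mem_stdSimplex_eq_sum_mul {β : Type*} [Fintype β] [Nonempty β] {p : β → ℝ}
    (hp : ∀ y, 0 ≤ p y) : ∃ q ∈ stdSimplex ℝ β, ∀ y, p y = (∑ y', p y') * q y := by
  classical
  by_cases h : ∑ y, p y = 0
  · have hzero := (sum_eq_zero_iff_of_nonneg fun y _ => hp y).1 h
    exact ⟨Pi.single (Classical.arbitrary β) 1, single_mem_stdSimplex ℝ _,
      fun y => by rw [h, zero_mul, hzero y (mem_univ y)]⟩
  · refine ⟨fun y => p y / ∑ y', p y',
      ⟨fun y => div_nonneg (hp y) (sum_nonneg fun y _ => hp y), by rw [← sum_div, div_self h]⟩,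
      fun y => by field_simp⟩

theorem exists_causal_model_card_le_general
    {𝒳 𝒴 : Type*} [Fintype 𝒳] [Fintype 𝒴] [DecidableEq 𝒴] (n : ℕ)
    (hX : Fintype.card 𝒳 = n) (hY : Fintype.card 𝒴 = n)
    (p : 𝒳 → 𝒴 → ℝ) (hnn : ∀ x y, 0 ≤ p x y) :
    ∃ (m : ℕ) (pE : Fin m → ℝ) (f : 𝒳 → Fin m → 𝒴),
      m ≤ n * (n - 1) + 1 ∧ IsCausalModel p pE f := by
  have hcond : ∀ x, ∃ q ∈ stdSimplex ℝ 𝒴, ∀ y, p x y = (∑ y', p x y') * q y := fun x =>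
    have : Nonempty 𝒴 := Fintype.card_pos_iff.1 (hY ▸ hX ▸ Fintype.card_pos_iff.2 ⟨x⟩)
    exists_mem_stdSimplex_eq_sum_mul (hnn x)
  choose q hq hpq using hcond
  obtain ⟨m, hm, pE, f, hpE, hlaw⟩ := exists_common_coupling q hq
  refine ⟨m, pE, f, by rwa [hX, hY] at hm, hpE.1, hpE.2, fun x y => ?_⟩
  rw [hlaw, ← hpq]

/-- **Upper bound on the minimum cardinality of the exogenous variable.**
Let `X ∈ 𝒳`, `Y ∈ 𝒴` with `|𝒳| = |𝒴| = n` have joint distribution `p(x,y)`.  Then there is a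
causal model `Y = f(X,E)` with `E ⟂ X` inducing `p`, in which the exogenous variable `E`
has support of cardinality at most `n(n-1) + 1`. -/
theorem exists_causal_model_card_le
    {𝒳 𝒴 : Type*} [Fintype 𝒳] [Fintype 𝒴] [DecidableEq 𝒴] (n : ℕ)
    (hX : Fintype.card 𝒳 = n) (hY : Fintype.card 𝒴 = n)
    (p : 𝒳 → 𝒴 → ℝ) (hnn : ∀ x y, 0 ≤ p x y) (hsum : ∑ x, ∑ y, p x y = 1) :
    ∃ (m : ℕ) (pE : Fin m → ℝ) (f : 𝒳 → Fin m → 𝒴),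
      m ≤ n * (n - 1) + 1 ∧ IsCausalModel p pE f :=
  exists_causal_model_card_le_general n hX hY p hnn
end

section
/- Every n×n column-stochastic matrix A (entries nonnegative, each column summing to 1) can be written as A = ∑_{k=1}^{m} e_k F_k, where m ≤ n(n−1)+1, each e_k ≥ 0 with ∑_{k=1}^{m} e_k = 1, and each F_k is an n×n {0,1} matrix with exactly one 1 in every column. -/
/-!
Greedy peeling. Pick a positive entry `A (f j) j` in every column and let `e` be the smallest of
them. If `e = 1`, then `A` is the matrix `D f` with ones exactly at the `(f j, j)`. Otherwise
`A = e • D f + (1 - e) • A'` with `A' = (A - e • D f) / (1 - e)` column-stochastic, and `A'` has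
strictly fewer nonzero entries than `A` (the minimising entry vanishes, no new one appears).
A column-stochastic matrix has at least `n` nonzero entries, one per column, so there are at most
`n² - n` peeling steps before a deterministic matrix is reached.
-/

open Finset

variable {ι κ : Type*}

def deterministicMatrix [DecidableEq ι] (f : κ → ι) : Matrix ι κ ℝ :=
  Matrix.of fun i j => if i = f j then 1 else 0

lemma deterministicMatrix_apply_eq_zero_or_one [DecidableEq ι] (f : κ → ι) (i : ι) (j : κ) :
    deterministicMatrix f i j = 0 ∨ deterministicMatrix f i j = 1 := by
  by_cases h : i = f j <;> simp [deterministicMatrix, h]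

lemma existsUnique_deterministicMatrix_apply_eq_one [DecidableEq ι] (f : κ → ι) (j : κ) :
    ∃! i, deterministicMatrix f i j = 1 :=
  ⟨f j, by simp [deterministicMatrix], fun i hi => by
    by_contra h
    simp [deterministicMatrix, h] at hi⟩

lemma sum_deterministicMatrix_apply [Fintype ι] [DecidableEq ι] (f : κ → ι) (j : κ) :
    ∑ i, deterministicMatrix f i j = 1 := by
  simp [deterministicMatrix]

noncomputable def nonzeroEntries [Fintype ι] [Fintype κ] (A : Matrix ι κ ℝ) : Finset (ι × κ) :=
  univ.filter fun p => A p.1 p.2 ≠ 0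

section ColumnStochastic

variable [Fintype ι] {A : Matrix ι κ ℝ}

lemma apply_le_one_of_sum_col_eq_one (hnn : ∀ i j, 0 ≤ A i j) (hcol : ∀ j, ∑ i, A i j = 1)
    (i : ι) (j : κ) : A i j ≤ 1 :=
  hcol j ▸ single_le_sum (fun i _ => hnn i j) (mem_univ i)

lemma exists_pos_of_sum_col_eq_one (hcol : ∀ j, ∑ i, A i j = 1) (j : κ) : ∃ i, 0 < A i j := by
  simpa using exists_lt_of_sum_lt (s := univ) (f := 0) (g := fun i => A i j) (by simp [hcol j])

lemma eq_deterministicMatrix_of_apply_eq_one [DecidableEq ι] (hnn : ∀ i j, 0 ≤ A i j)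
    (hcol : ∀ j, ∑ i, A i j = 1) {f : κ → ι} (hf : ∀ j, A (f j) j = 1) :
    A = deterministicMatrix f := by
  ext i j
  have hrest : ∑ i ∈ univ.erase (f j), A i j = 0 := by
    have := hcol j
    rw [← add_sum_erase _ _ (mem_univ (f j)), hf j] at this
    linarith
  by_cases hi : i = f j
  · simp [deterministicMatrix, hi, hf j]
  · simp only [deterministicMatrix, Matrix.of_apply, if_neg hi]
    exact (sum_eq_zero_iff_of_nonneg (fun i _ => hnn i j)).1 hrest i (mem_erase.2 ⟨hi, mem_univ i⟩)

end ColumnStochastic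

lemma card_le_card_nonzeroEntries [Fintype ι] [Fintype κ] {A : Matrix ι κ ℝ} {f : κ → ι}
    (hf : ∀ j, A (f j) j ≠ 0) : Fintype.card κ ≤ #(nonzeroEntries A) :=
  card_le_card_of_injOn (fun j => (f j, j)) (fun j _ => by simp [nonzeroEntries, hf j])
    (fun _ _ _ _ h => congrArg Prod.snd h)

noncomputable def peel [DecidableEq ι] (A : Matrix ι κ ℝ) (f : κ → ι) (e : ℝ) : Matrix ι κ ℝ :=
  (1 - e)⁻¹ • (A - e • deterministicMatrix f)

section Peel

variable [DecidableEq ι] {A : Matrix ι κ ℝ} {f : κ → ι} {e : ℝ}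

lemma peel_apply_nonneg (hnn : ∀ i j, 0 ≤ A i j) (he1 : e < 1) (hef : ∀ j, e ≤ A (f j) j)
    (i : ι) (j : κ) : 0 ≤ peel A f e i j := by
  refine mul_nonneg (inv_nonneg.2 (sub_nonneg.2 he1.le)) (sub_nonneg.2 ?_)
  by_cases hi : i = f j
  · simpa [deterministicMatrix, hi] using hef j
  · simpa [deterministicMatrix, hi] using hnn i j

lemma sum_peel_apply [Fintype ι] (hcol : ∀ j, ∑ i, A i j = 1) (he1 : e ≠ 1) (j : κ) :
    ∑ i, peel A f e i j = 1 := by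
  have h : 1 - e ≠ 0 := sub_ne_zero.2 he1.symm
  simp only [peel, Matrix.smul_apply, Matrix.sub_apply, smul_eq_mul, ← mul_sum, sum_sub_distrib,
    hcol j, sum_deterministicMatrix_apply, mul_one, inv_mul_cancel₀ h]

lemma eq_smul_add_smul_peel (A : Matrix ι κ ℝ) (f : κ → ι) (he1 : e ≠ 1) :
    A = e • deterministicMatrix f + (1 - e) • peel A f e := by
  rw [peel, smul_smul, mul_inv_cancel₀ (sub_ne_zero.2 he1.symm), one_smul, add_sub_cancel]

lemma nonzeroEntries_peel_ssubset [Fintype ι] [Fintype κ] (hpos : ∀ j, 0 < A (f j) j) {j₀ : κ}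
    (he : e = A (f j₀) j₀) : nonzeroEntries (peel A f e) ⊂ nonzeroEntries A := by
  refine Finset.ssubset_iff_subset_ne.2 ⟨fun p hp => ?_, fun h => ?_⟩
  · simp only [nonzeroEntries, mem_filter, mem_univ, true_and] at hp ⊢
    by_cases hi : p.1 = f p.2
    · exact hi ▸ (hpos p.2).ne'
    · intro h0
      simp [peel, deterministicMatrix, hi, h0] at hp
  · have : (f j₀, j₀) ∈ nonzeroEntries A := by simp [nonzeroEntries, (hpos j₀).ne']
    rw [← h] at this
    simp [nonzeroEntries, peel, deterministicMatrix, he] at this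

end Peel

theorem exists_convex_comb_deterministicMatrix [Fintype ι] [DecidableEq ι] [Fintype κ]
    (A : Matrix ι κ ℝ) (hnn : ∀ i j, 0 ≤ A i j) (hcol : ∀ j, ∑ i, A i j = 1) :
    ∃ (m : ℕ) (e : Fin m → ℝ) (f : Fin m → κ → ι),
      m + Fintype.card κ ≤ #(nonzeroEntries A) + 1 ∧ (∀ k, 0 ≤ e k) ∧ ∑ k, e k = 1 ∧
      A = ∑ k, e k • deterministicMatrix (f k) := by
  induction hs : #(nonzeroEntries A) using Nat.strong_induction_on generalizing A with
  | _ s ih =>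
  choose f hpos using exists_pos_of_sum_col_eq_one hcol
  have hcard : Fintype.card κ ≤ s := hs ▸ card_le_card_nonzeroEntries fun j => (hpos j).ne'
  by_cases hdet : ∀ j, A (f j) j = 1
  · exact ⟨1, fun _ => 1, fun _ => f, by omega, fun _ => zero_le_one, by simp,
      by simp [eq_deterministicMatrix_of_apply_eq_one hnn hcol hdet]⟩
  push Not at hdet
  obtain ⟨j₁, hj₁⟩ := hdet
  obtain ⟨j₀, -, hj₀⟩ := exists_min_image univ (fun j => A (f j) j) ⟨j₁, mem_univ j₁⟩
  set e := A (f j₀) j₀ with he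
  have hef : ∀ j, e ≤ A (f j) j := fun j => hj₀ j (mem_univ j)
  have he1 : e < 1 :=
    (hef j₁).trans_lt ((apply_le_one_of_sum_col_eq_one hnn hcol _ _).lt_of_ne hj₁)
  have hlt : #(nonzeroEntries (peel A f e)) < s :=
    hs ▸ card_lt_card (nonzeroEntries_peel_ssubset hpos he)
  obtain ⟨m, e', f', hm, he'0, he'1, hA'⟩ := ih _ hlt (peel A f e)
    (peel_apply_nonneg hnn he1 hef) (sum_peel_apply hcol he1.ne) rfl
  refine ⟨m + 1, Fin.cons e fun k => (1 - e) * e' k, Fin.cons f f', by omega, ?_, ?_, ?_⟩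
  · exact Fin.cases (hpos j₀).le fun k => mul_nonneg (sub_nonneg.2 he1.le) (he'0 k)
  · simp [Fin.sum_cons, ← mul_sum, he'1]
  · rw [eq_smul_add_smul_peel A f he1.ne, hA']
    simp only [Fin.sum_univ_succ, Fin.cons_zero, Fin.cons_succ, smul_sum, mul_smul]

/-- **Decomposition of column-stochastic matrices.**
Every `n × n` column-stochastic matrix `A` (nonnegative entries, each column summing to `1`)
can be written as `A = ∑_{k=1}^{m} e_k F_k` with `m ≤ n(n-1) + 1`, where the `e_k` are
nonnegative and sum to `1`, and each `F_k` is an `n × n` `{0,1}` matrix with exactly one `1`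
in every column. -/
theorem column_stochastic_decomposition
    (n : ℕ) (A : Fin n → Fin n → ℝ)
    (hnn : ∀ i j, 0 ≤ A i j) (hcol : ∀ j, ∑ i, A i j = 1) :
    ∃ (m : ℕ) (e : Fin m → ℝ) (F : Fin m → Fin n → Fin n → ℝ),
      m ≤ n * (n - 1) + 1 ∧
      (∀ k, 0 ≤ e k) ∧ (∑ k, e k = 1) ∧
      (∀ k i j, F k i j = 0 ∨ F k i j = 1) ∧
      (∀ k j, ∃! i, F k i j = 1) ∧
      (∀ i j, A i j = ∑ k, e k * F k i j) := by
  obtain ⟨m, e, f, hm, he0, he1, hA⟩ :=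
    exists_convex_comb_deterministicMatrix (A : Matrix (Fin n) (Fin n) ℝ) hnn hcol
  have hsupp : #(nonzeroEntries (A : Matrix (Fin n) (Fin n) ℝ)) ≤ n * n := by
    simpa using card_le_univ (nonzeroEntries (A : Matrix (Fin n) (Fin n) ℝ))
  have hsq : n * (n - 1) = n * n - n := Nat.mul_sub_one n n
  refine ⟨m, e, fun k => deterministicMatrix (f k), ?_, he0, he1,
    fun k => deterministicMatrix_apply_eq_zero_or_one (f k),
    fun k => existsUnique_deterministicMatrix_apply_eq_one (f k), fun i j => ?_⟩
  · simp only [Fintype.card_fin] at hm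
    omega
  · simp [congrFun₂ hA i j, Matrix.sum_apply]
end

section
/- Let the n columns of an n×n matrix P be independently sampled from the uniform distribution on the (n−1)-dimensional probability simplex. Then, with probability 1, there exist no m < n(n−1), no matrix M ∈ {0,1}^{n²×m}, and no vector e ∈ ℝ₊^m with ∑ᵢ e(i) = 1 such that vec(P) = M e, where vec stacks the columns of P. -/
/-!
For fixed `m` and a fixed `0/1` pattern `M`, the matrices `P` with `vec(P) = M e`, `e` in the
simplex of `ℝᵐ`, form the image of that simplex under a linear map, hence lie in the affine span
of `m` points.
Dropping the last row of every column identifies the product of the column simplices with a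
subset of `ℝ^{n(n-1)}`; since the inverse chart is Lipschitz, the uniform measure on each simplex
is absolutely continuous with respect to Lebesgue measure in this chart. In the chart, the affine
span of `m < n(n-1)` points is a proper affine subspace, hence Lebesgue-null, and there are only
countably many pairs `(m, M)`.
-/

open MeasureTheory

/-- The uniform probability measure on the `(k-1)`-dimensional probability simplex
`{x ∈ ℝᵏ : x ≥ 0, ∑ᵢ xᵢ = 1}`: the `(k-1)`-dimensional Hausdorff (surface) measure
restricted to the simplex and normalized to total mass `1`. -/
noncomputable def uniformSimplex (k : ℕ) : Measure (Fin k → ℝ) :=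
  (μH[(k : ℝ) - 1] (stdSimplex ℝ (Fin k)))⁻¹ •
    (μH[(k : ℝ) - 1]).restrict (stdSimplex ℝ (Fin k))

open Set
open scoped NNReal

namespace MeasureTheory.Measure

theorem AbsolutelyContinuous.pi_fin {n : ℕ} {α : Fin n → Type*} [∀ i, MeasurableSpace (α i)]
    {μ ν : ∀ i, Measure (α i)} [∀ i, SigmaFinite (μ i)] [∀ i, SigmaFinite (ν i)]
    (h : ∀ i, μ i ≪ ν i) : Measure.pi μ ≪ Measure.pi ν := by
  induction n with
  | zero => rw [pi_of_empty μ, pi_of_empty ν]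
  | succ n ih =>
    rw [← (measurePreserving_piFinSuccAbove μ 0).symm.map_eq,
      ← (measurePreserving_piFinSuccAbove ν 0).symm.map_eq]
    exact ((h 0).prod (ih fun i => h i.succ)).map (MeasurableEquiv.measurable _)

theorem AbsolutelyContinuous.pi {ι : Type*} [Fintype ι] {α : ι → Type*}
    [∀ i, MeasurableSpace (α i)]
    {μ ν : ∀ i, Measure (α i)} [∀ i, SigmaFinite (μ i)] [∀ i, SigmaFinite (ν i)]
    (h : ∀ i, μ i ≪ ν i) : Measure.pi μ ≪ Measure.pi ν := by
  let e := (Fintype.equivFin ι).symm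
  rw [← (measurePreserving_piCongrLeft μ e).map_eq, ← (measurePreserving_piCongrLeft ν e).map_eq]
  exact (AbsolutelyContinuous.pi_fin fun i => h (e i)).map (MeasurableEquiv.measurable _)

end MeasureTheory.Measure

theorem affineSpan_range_ne_top {K V P ι : Type*} [DivisionRing K] [AddCommGroup V] [Module K V]
    [AddTorsor V P] [Fintype ι] (v : ι → P) (h : Fintype.card ι ≤ Module.finrank K V) :
    affineSpan K (range v) ≠ ⊤ := by
  intro htop
  rcases hcard : Fintype.card ι with _ | m
  · have : IsEmpty ι := Fintype.card_eq_zero_iff.1 hcard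
    rw [range_eq_empty, AffineSubspace.span_empty] at htop
    exact AffineSubspace.bot_ne_top K V P htop
  · have hspan := finrank_vectorSpan_range_le K v hcard
    rw [← direction_affineSpan, htop, AffineSubspace.direction_top, finrank_top] at hspan
    omega

theorem image_stdSimplex_subset_affineSpan {𝕜 E ι : Type*} [Field 𝕜] [LinearOrder 𝕜]
    [IsStrictOrderedRing 𝕜] [AddCommGroup E] [Module 𝕜 E] [Fintype ι] [DecidableEq ι]
    (L : (ι → 𝕜) →ₗ[𝕜] E) :
    L '' stdSimplex 𝕜 ι ⊆ affineSpan 𝕜 (range fun i => L (Pi.single i 1)) := by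
  rw [← convexHull_rangle_single_eq_stdSimplex, L.image_convexHull, ← range_comp]
  exact convexHull_subset_affineSpan _

theorem MeasureTheory.Measure.addHaar_image_stdSimplex {E ι : Type*} [NormedAddCommGroup E]
    [NormedSpace ℝ E] [MeasurableSpace E] [BorelSpace E] [FiniteDimensional ℝ E] [Fintype ι]
    (μ : Measure E) [μ.IsAddHaarMeasure] (L : (ι → ℝ) →ₗ[ℝ] E)
    (h : Fintype.card ι ≤ Module.finrank ℝ E) : μ (L '' stdSimplex ℝ ι) = 0 := by
  classical
  exact measure_mono_null (image_stdSimplex_subset_affineSpan L)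
    (addHaar_affineSubspace μ _ (affineSpan_range_ne_top _ h))

def simplexChart (k : ℕ) (x : Fin k → ℝ) : Fin (k + 1) → ℝ :=
  Fin.snoc x (1 - ∑ i, x i)

namespace simplexChart

variable (k : ℕ)

theorem leftInverse :
    Function.LeftInverse (Fin.init : (Fin (k + 1) → ℝ) → Fin k → ℝ) (simplexChart k) :=
  fun x => Fin.init_snoc (α := fun _ => ℝ) _ x

theorem lipschitzWith : LipschitzWith (k + 1) (simplexChart k) := by
  refine LipschitzWith.of_dist_le_mul fun x y => (dist_pi_le_iff (by positivity)).2 fun i => ?_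
  have hk : dist x y ≤ (k + 1 : ℝ≥0) * dist x y := by
    push_cast; nlinarith [dist_nonneg (x := x) (y := y)]
  induction i using Fin.lastCases with
  | cast j => simpa [simplexChart] using (dist_le_pi_dist x y j).trans hk
  | last =>
    calc dist (simplexChart k x (Fin.last k)) (simplexChart k y (Fin.last k))
        = |∑ i, (y i - x i)| := by
          simp only [simplexChart, Fin.snoc_last, Real.dist_eq, Finset.sum_sub_distrib]; ring_nf
      _ ≤ ∑ i, dist x y := (Finset.abs_sum_le_sum_abs _ _).trans <| Finset.sum_le_sum fun i _ => by
          rw [← Real.dist_eq, dist_comm]; exact dist_le_pi_dist x y i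
      _ = k * dist x y := by simp
      _ ≤ (k + 1 : ℝ≥0) * dist x y := by
          push_cast; nlinarith [dist_nonneg (x := x) (y := y)]

@[fun_prop]
theorem continuous : Continuous (simplexChart k) := (lipschitzWith k).continuous

theorem isClosedEmbedding : Topology.IsClosedEmbedding (simplexChart k) :=
  (leftInverse k).isClosedEmbedding (by fun_prop) (continuous k)

theorem stdSimplex_subset_range : stdSimplex ℝ (Fin (k + 1)) ⊆ range (simplexChart k) := by
  intro p hp
  refine ⟨Fin.init p, funext fun i => ?_⟩
  induction i using Fin.lastCases with
  | last =>
    have hsum := hp.2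
    rw [Fin.sum_univ_castSucc] at hsum
    simp only [simplexChart, Fin.snoc_last, Fin.init]
    linarith
  | cast j => simp [simplexChart, Fin.init]

end simplexChart

-- If `μH` of the simplex is `0` or `∞`, the normalizing factor makes `uniformSimplex` zero.
instance isFiniteMeasure_uniformSimplex (k : ℕ) : IsFiniteMeasure (uniformSimplex k) :=
  ⟨by
    rw [uniformSimplex, Measure.smul_apply, Measure.restrict_apply_univ, smul_eq_mul]
    exact (ENNReal.inv_mul_le_one _).trans_lt ENNReal.one_lt_top⟩

theorem uniformSimplex_absolutelyContinuous (k : ℕ) :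
    uniformSimplex (k + 1) ≪ volume.map (simplexChart k) := by
  refine Measure.AbsolutelyContinuous.mk fun s hs hs0 => ?_
  rw [Measure.map_apply (simplexChart.continuous k).measurable hs] at hs0
  have hdim : ((k + 1 : ℕ) : ℝ) - 1 = Fintype.card (Fin k) := by simp
  have hnull : μH[((k + 1 : ℕ) : ℝ) - 1] (s ∩ stdSimplex ℝ (Fin (k + 1))) = 0 := by
    refine le_antisymm ?_ bot_le
    calc μH[((k + 1 : ℕ) : ℝ) - 1] (s ∩ stdSimplex ℝ (Fin (k + 1)))
        ≤ μH[Fintype.card (Fin k)] (simplexChart k '' (simplexChart k ⁻¹' s)) := by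
          rw [hdim, image_preimage_eq_inter_range]
          exact measure_mono (inter_subset_inter_right _ (simplexChart.stdSimplex_subset_range k))
      _ ≤ (k + 1 : ℝ≥0) ^ (Fintype.card (Fin k) : ℝ) *
            μH[Fintype.card (Fin k)] (simplexChart k ⁻¹' s) :=
          (simplexChart.lipschitzWith k).hausdorffMeasure_image_le (by positivity) _
      _ = 0 := by rw [hausdorffMeasure_pi_real, hs0, mul_zero]
  rw [uniformSimplex, Measure.smul_apply, Measure.restrict_apply hs, hnull, smul_zero]

theorem pi_uniformSimplex_absolutelyContinuous (κ : Type*) [Fintype κ] (k : ℕ) :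
    Measure.pi (fun _ : κ => uniformSimplex (k + 1)) ≪
      volume.map fun (x : κ → Fin k → ℝ) j => simplexChart k (x j) := by
  have : SigmaFinite (volume.map (simplexChart k)) :=
    (simplexChart.isClosedEmbedding k).measurableEmbedding.sigmaFinite_map
  rw [volume_pi, Measure.pi_map_pi fun _ => (simplexChart.continuous k).aemeasurable]
  exact Measure.AbsolutelyContinuous.pi fun _ => uniformSimplex_absolutelyContinuous k

theorem pi_uniformSimplex_image_stdSimplex {κ ι : Type*} [Fintype κ] [Fintype ι] (k : ℕ)
    (L : (ι → ℝ) →ₗ[ℝ] (κ → Fin (k + 1) → ℝ)) (h : Fintype.card ι ≤ Fintype.card κ * k) :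
    Measure.pi (fun _ : κ => uniformSimplex (k + 1)) (L '' stdSimplex ℝ ι) = 0 := by
  let dropLast : (κ → Fin (k + 1) → ℝ) →ₗ[ℝ] (κ → Fin k → ℝ) :=
    LinearMap.pi fun j => LinearMap.funLeft ℝ ℝ Fin.castSucc ∘ₗ LinearMap.proj j
  have hdropLast (x : κ → Fin k → ℝ) : dropLast (fun j => simplexChart k (x j)) = x :=
    funext fun j => simplexChart.leftInverse k (x j)
  have hL : MeasurableSet (L '' stdSimplex ℝ ι) :=
    ((isCompact_stdSimplex ℝ ι).image L.continuous_of_finiteDimensional).measurableSet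
  refine pi_uniformSimplex_absolutelyContinuous κ k ?_
  rw [Measure.map_apply (by fun_prop) hL]
  refine measure_mono_null ?_ <|
    volume.addHaar_image_stdSimplex (dropLast ∘ₗ L) (by simpa [Module.finrank_pi_fintype] using h)
  rintro x ⟨e, he, hx⟩
  exact ⟨e, he, by simp [hx, hdropLast]⟩

theorem no_small_decomposition_ae_general (n : ℕ) :
    ∀ᵐ P ∂(Measure.pi fun _ : Fin n => uniformSimplex n),
      ¬ ∃ (m : ℕ) (_ : m < n * (n - 1)) (M : Fin n → Fin n → Fin m → ℝ)
          (e : Fin m → ℝ),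
          (∀ i j k, M i j k = 0 ∨ M i j k = 1) ∧
          (∀ k, 0 ≤ e k) ∧ (∑ k, e k = 1) ∧
          (∀ i j, P j i = ∑ k, M i j k * e k) := by
  rcases n with _ | k
  · exact ae_of_all _ fun P ⟨m, hm, _⟩ => Nat.not_lt_zero m hm
  let binary (m : ℕ) : Set (Fin (k + 1) → Fin (k + 1) → Fin m → ℝ) :=
    {M | ∀ i j t, M i j t = 0 ∨ M i j t = 1}
  have hfinite (m : ℕ) : (binary m).Finite :=
    (Finite.pi fun _ => Finite.pi fun _ => Finite.pi fun _ => toFinite {(0 : ℝ), 1}).subset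
      fun M hM i _ j _ t _ => hM i j t
  rw [ae_iff]
  refine measure_mono_null (t := ⋃ (m) (_ : m < (k + 1) * k) (M ∈ binary m),
    Fintype.linearCombination ℝ (fun t j i => M i j t) '' stdSimplex ℝ (Fin m)) ?_ ?_
  · intro P hP
    obtain ⟨m, hm, M, e, hM, he0, he1, hP⟩ := not_not.1 hP
    simp only [mem_iUnion]
    exact ⟨m, by simpa using hm, M, hM, e, ⟨he0, he1⟩, by
      ext j i; simp [Fintype.linearCombination_apply, hP, mul_comm]⟩
  · refine measure_iUnion_null fun m => measure_iUnion_null fun hm =>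
      (measure_biUnion_null_iff (hfinite m).countable).2 fun M _ => ?_
    exact pi_uniformSimplex_image_stdSimplex k _ (by simpa using hm.le)

/-- **Generic conditional matrices need `n(n-1)` terms.**
If the `n` columns of an `n × n` matrix `P` (here `P j` is column `j`) are sampled
independently and uniformly from the `(n-1)`-dimensional probability simplex, then with
probability `1` there exist no `m < n(n-1)`, no `{0,1}` matrix `M ∈ {0,1}^{n²×m}` and no
nonnegative vector `e ∈ ℝ₊^m` summing to `1` with `vec(P) = M e`, i.e. with
`P j i = ∑ₖ M i j k · e k` for all `i, j`. -/
theorem no_small_decomposition_ae (n : ℕ) (hn : 0 < n) :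
    ∀ᵐ P ∂(Measure.pi fun _ : Fin n => uniformSimplex n),
      ¬ ∃ (m : ℕ) (_ : m < n * (n - 1)) (M : Fin n → Fin n → Fin m → ℝ)
          (e : Fin m → ℝ),
          (∀ i j k, M i j k = 0 ∨ M i j k = 1) ∧
          (∀ k, 0 ≤ e k) ∧ (∑ k, e k = 1) ∧
          (∀ i j, P j i = ∑ k, M i j k * e k) :=
  no_small_decomposition_ae_general n
end

section
/- Let V = {u₁,…,u_m} be a set of nonzero positive integers, let a be an integer with 0 ≤ a ≤ Σ where Σ = ∑_{i=1}^{m} u_i, and let M be the m×2 column-stochastic matrix with M(i,1) = uᵢ/Σ for all i ∈ [m], M(1,2) = a/Σ, M(2,2) = (Σ−a)/Σ, and all other entries zero. Then the minimum number of terms in a decomposition M = ∑_{k} x_k F_k, where x_k ≥ 0 with ∑_k x_k = 1 and each F_k is an m×2 {0,1} matrix with exactly one 1 in every column, equals m if and only if there exists a subset S ⊆ [m] with ∑_{i∈S} uᵢ = a. -/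
/-- `(x, F)` is a decomposition of the matrix `M` as a convex combination of `{0,1}`
matrices, each with exactly one `1` in every column. -/
def IsDecomposition {m n K : ℕ} (M : Fin m → Fin n → ℝ)
    (x : Fin K → ℝ) (F : Fin K → Fin m → Fin n → ℝ) : Prop :=
  (∀ k, 0 ≤ x k) ∧ (∑ k, x k = 1) ∧
  (∀ k i j, F k i j = 0 ∨ F k i j = 1) ∧
  (∀ k j, ∃! i, F k i j = 1) ∧
  (∀ i j, M i j = ∑ k, x k * F k i j)

/-- **Subset-sum reduction (NP-hardness core).**
Let `V = {u₁, …, u_m}` be positive integers, `0 ≤ a ≤ Σ` with `Σ = ∑ᵢ uᵢ`, and let `M` be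
the `m × 2` column-stochastic matrix with `M(i,1) = uᵢ/Σ`, `M(1,2) = a/Σ`,
`M(2,2) = (Σ-a)/Σ`, and all other entries `0`.  Then the minimum number of terms in a
decomposition of `M` as a convex combination of `{0,1}` matrices with exactly one `1` per
column equals `m` if and only if some subset `S ⊆ [m]` satisfies `∑_{i∈S} uᵢ = a`. -/
theorem min_decomposition_size_eq_iff_subset_sum
    (m : ℕ) (hm : 2 ≤ m) (u : Fin m → ℕ) (hu : ∀ i, 0 < u i)
    (a : ℕ) (ha : a ≤ ∑ i, u i)
    (M : Fin m → Fin 2 → ℝ)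
    (hM : ∀ i j, M i j =
      if j = 0 then (u i : ℝ) / (∑ i', (u i' : ℝ))
      else if (i : ℕ) = 0 then (a : ℝ) / (∑ i', (u i' : ℝ))
      else if (i : ℕ) = 1 then ((∑ i', (u i' : ℝ)) - (a : ℝ)) / (∑ i', (u i' : ℝ))
      else 0) :
    sInf {K : ℕ | ∃ (x : Fin K → ℝ) (F : Fin K → Fin m → Fin 2 → ℝ),
        IsDecomposition M x F} = m ↔
      ∃ S : Finset (Fin m), ∑ i ∈ S, u i = a := by
  classical
  have hm0 : 0 < m := by omega
  have hm1 : 1 < m := by omega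
  set σ : ℝ := ∑ i', (u i' : ℝ) with hσdef
  have hσpos : 0 < σ :=
    Finset.sum_pos (fun i _ => by exact_mod_cast hu i) ⟨⟨0, hm0⟩, Finset.mem_univ _⟩
  have hσne : σ ≠ 0 := ne_of_gt hσpos
  have hMc0 : ∀ i, M i 0 = (u i : ℝ) / σ := fun i => by rw [hM i 0]; simp
  have hMc1 : ∀ i : Fin m, M i 1 =
      if (i : ℕ) = 0 then (a : ℝ) / σ
      else if (i : ℕ) = 1 then (σ - a) / σ else 0 := fun i => by
    rw [hM i 1, if_neg (show (1 : Fin 2) ≠ 0 by decide)]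
  -- extraction of an injective assignment of terms to rows
  have hextract : ∀ (K : ℕ) (x : Fin K → ℝ) (F : Fin K → Fin m → Fin 2 → ℝ),
      IsDecomposition M x F → ∃ f : Fin m → Fin K,
        Function.Injective f ∧ ∀ i, x (f i) ≠ 0 ∧ F (f i) i 0 = 1 := by
    intro K x F hd
    obtain ⟨hx, hxs, hF01, hFu, hMF⟩ := hd
    have hex : ∀ i : Fin m, ∃ k, x k ≠ 0 ∧ F k i 0 = 1 := by
      intro i
      by_contra hc
      push_neg at hc
      have h0 : M i 0 = 0 := by
        rw [hMF]
        apply Finset.sum_eq_zero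
        intro k _
        by_cases hk : x k = 0
        · rw [hk, zero_mul]
        · rcases hF01 k i 0 with h | h
          · rw [h, mul_zero]
          · exact absurd h (hc k hk)
      have hpos : 0 < M i 0 := by
        rw [hMc0]
        exact div_pos (by exact_mod_cast hu i) hσpos
      rw [h0] at hpos; exact lt_irrefl _ hpos
    choose f hf using hex
    refine ⟨f, ?_, hf⟩
    intro i i' hii
    exact (hFu (f i) 0).unique (hf i).2 (hii ▸ (hf i').2)
  have hlow : ∀ K ∈ {K : ℕ | ∃ (x : Fin K → ℝ) (F : Fin K → Fin m → Fin 2 → ℝ),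
      IsDecomposition M x F}, m ≤ K := by
    rintro K ⟨x, F, hd⟩
    obtain ⟨f, hfin, -⟩ := hextract K x F hd
    simpa using Fintype.card_le_of_injective f hfin
  -- forward: a decomposition with m terms yields a subset sum
  have hforward : (∃ (x : Fin m → ℝ) (F : Fin m → Fin m → Fin 2 → ℝ),
      IsDecomposition M x F) → ∃ S : Finset (Fin m), ∑ i ∈ S, u i = a := by
    rintro ⟨x, F, hd⟩
    obtain ⟨f, hfin, hf⟩ := hextract m x F hd
    obtain ⟨hx, hxs, hF01, hFu, hMF⟩ := hd
    have hfb : Function.Bijective f := ⟨hfin, Finite.surjective_of_injective hfin⟩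
    have hFkey : ∀ k i, F k i 0 = if k = f i then 1 else 0 := by
      intro k i
      by_cases hk : k = f i
      · rw [if_pos hk, hk]; exact (hf i).2
      · rw [if_neg hk]
        obtain ⟨i', rfl⟩ := hfb.2 k
        rcases hF01 (f i') i 0 with h | h
        · exact h
        · exact absurd (congrArg f ((hFu (f i') 0).unique (hf i').2 h)) hk
    have hxval : ∀ i, x (f i) = (u i : ℝ) / σ := by
      intro i
      have h1 : M i 0 = x (f i) := by
        rw [hMF i 0,
          show (∑ k, x k * F k i 0) = ∑ k, if k = f i then x k else 0 from
            Finset.sum_congr rfl (fun k _ => by rw [hFkey k i]; split <;> simp)]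
        simp
      rw [← h1, hMc0]
    set i0 : Fin m := ⟨0, hm0⟩ with hi0def
    set S : Finset (Fin m) := Finset.univ.filter (fun i => F (f i) i0 1 = 1) with hSdef
    have hcol : M i0 1 = ∑ i ∈ S, (u i : ℝ) / σ := by
      rw [hMF i0 1,
        ← Fintype.sum_bijective f hfb (fun i => x (f i) * F (f i) i0 1)
          (fun k => x k * F k i0 1) (fun i => rfl)]
      rw [show (∑ i, x (f i) * F (f i) i0 1)
          = ∑ i, if F (f i) i0 1 = 1 then (u i : ℝ) / σ else 0 from
        Finset.sum_congr rfl (fun i _ => by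
          rcases hF01 (f i) i0 1 with h | h
          · rw [h, mul_zero, if_neg (by norm_num)]
          · rw [if_pos h, h, mul_one, hxval])]
      rw [Finset.sum_filter]
    have hMi0 : M i0 1 = (a : ℝ) / σ := by rw [hMc1]; simp [hi0def]
    refine ⟨S, ?_⟩
    have : (a : ℝ) = ∑ i ∈ S, (u i : ℝ) := by
      have h2 : (a : ℝ) / σ = (∑ i ∈ S, (u i : ℝ)) / σ := by
        rw [← hMi0, hcol, Finset.sum_div]
      field_simp at h2
      exact h2
    exact_mod_cast this.symm
  -- backward: a subset sum yields a decomposition with m terms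
  have hbackward : (∃ S : Finset (Fin m), ∑ i ∈ S, u i = a) →
      (∃ (x : Fin m → ℝ) (F : Fin m → Fin m → Fin 2 → ℝ), IsDecomposition M x F) := by
    rintro ⟨S, hS⟩
    have hScast : (∑ i ∈ S, (u i : ℝ)) = (a : ℝ) := by exact_mod_cast hS
    refine ⟨fun i => (u i : ℝ) / σ, fun k i j =>
      if j = 0 then (if i = k then 1 else 0)
      else if k ∈ S then (if (i : ℕ) = 0 then 1 else 0)
      else (if (i : ℕ) = 1 then 1 else 0), ?_, ?_, ?_, ?_, ?_⟩
    · intro k; positivity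
    · rw [← Finset.sum_div, div_self hσne]
    · intro k i j; dsimp only; split_ifs <;> simp
    · intro k j
      have hj : j = 0 ∨ j = 1 := by revert j; decide
      rcases hj with rfl | rfl
      · simp only [if_pos rfl, if_true, ite_true]
        refine ⟨k, by simp, fun i hi => ?_⟩
        simpa using hi
      · simp only [if_neg (show ¬(1 : Fin 2) = 0 by decide)]
        by_cases hk : k ∈ S
        · simp only [if_pos hk]
          refine ⟨⟨0, hm0⟩, by simp, fun i hi => Fin.ext (by simpa using hi)⟩
        · simp only [if_neg hk]
          refine ⟨⟨1, hm1⟩, by simp, fun i hi => Fin.ext (by simpa using hi)⟩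
    · intro i j
      have hj : j = 0 ∨ j = 1 := by revert j; decide
      rcases hj with rfl | rfl
      · simp only [if_pos rfl, if_true, ite_true]
        rw [hMc0]
        rw [show (∑ k, ((u k : ℝ) / σ) * (if i = k then 1 else 0))
            = ∑ k, if i = k then (u k : ℝ) / σ else 0 from
          Finset.sum_congr rfl (fun k _ => by split <;> simp)]
        simp
      · simp only [if_neg (show ¬(1 : Fin 2) = 0 by decide)]
        rw [hMc1]
        by_cases hi0 : (i : ℕ) = 0
        · rw [if_pos hi0]
          rw [show (∑ k, ((u k : ℝ) / σ) *
              (if k ∈ S then (if (i : ℕ) = 0 then 1 else 0)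
               else (if (i : ℕ) = 1 then 1 else 0)))
              = ∑ k, if k ∈ S then (u k : ℝ) / σ else 0 from
            Finset.sum_congr rfl (fun k _ => by
              simp only [hi0]
              split <;> simp)]
          rw [Finset.sum_ite_mem, Finset.univ_inter, ← Finset.sum_div, hScast]
        · rw [if_neg hi0]
          by_cases hi1 : (i : ℕ) = 1
          · rw [if_pos hi1]
            rw [show (∑ k, ((u k : ℝ) / σ) *
                (if k ∈ S then (if (i : ℕ) = 0 then 1 else 0)
                 else (if (i : ℕ) = 1 then 1 else 0)))
                = ∑ k, if k ∈ Sᶜ then (u k : ℝ) / σ else 0 from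
              Finset.sum_congr rfl (fun k _ => by
                simp only [hi0, hi1, Finset.mem_compl]
                split <;> simp [*])]
            rw [Finset.sum_ite_mem, Finset.univ_inter, ← Finset.sum_div]
            rw [show (∑ k ∈ Sᶜ, (u k : ℝ)) = σ - a by
              have h3 := Finset.sum_add_sum_compl S (fun k => (u k : ℝ))
              rw [hScast] at h3
              linarith [h3]]
          · rw [if_neg hi1]
            symm
            apply Finset.sum_eq_zero
            intro k _
            simp [hi0, hi1]
  -- assemble
  constructor
  · intro h
    have hne : {K : ℕ | ∃ (x : Fin K → ℝ) (F : Fin K → Fin m → Fin 2 → ℝ),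
        IsDecomposition M x F}.Nonempty := by
      by_contra h'
      rw [Set.not_nonempty_iff_eq_empty] at h'
      rw [h', Nat.sInf_empty] at h
      omega
    have := Nat.sInf_mem hne
    rw [h] at this
    exact hforward this
  · intro h
    have hmem : m ∈ {K : ℕ | ∃ (x : Fin K → ℝ) (F : Fin K → Fin m → Fin 2 → ℝ),
        IsDecomposition M x F} := hbackward h
    exact le_antisymm (Nat.sInf_le hmem) (le_csInf ⟨m, hmem⟩ hlow)
end

section
/- Let X and Y be discrete random variables each taking values in [n] with joint distribution p(x,y) and p(X=i) > 0 for all i, and for i ∈ [n] let pᵢ denote the conditional distribution of Y given X = i. Then the minimum of the Shannon entropy H(E) over all causal models ({X,Y}, E, f, X→Y) with E independent of X, Y = f(X,E), inducing p(x,y), equals the minimum of the joint Shannon entropy H(U₁,…,Uₙ) over all joint distributions of random variables (U₁,…,Uₙ), each Uᵢ taking values in [n], whose marginals satisfy Uᵢ ~ pᵢ for every i; moreover both minima are attained. -/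
/-!
A coupling `q` of the conditionals `pᵢ` is itself a causal model: take `E = (U₁, …, Uₙ) ~ q`
and `f(x, E) = U_x`. Conversely a causal model `(pE, f)` yields the coupling obtained by pushing
`pE` forward along `e ↦ (f(1, e), …, f(n, e))`, and a deterministic pushforward does not increase
entropy. So the two infima agree, and the coupling infimum is attained because couplings form a
nonempty compact set on which entropy is continuous.
-/

/-- Shannon entropy (base 2) of a finitely supported distribution. -/
noncomputable def shannonEntropy {α : Type*} [Fintype α] (q : α → ℝ) : ℝ :=
  -∑ i, q i * Real.logb 2 (q i)

open Finset Real

def pushforward {γ α : Type*} [Fintype γ] [DecidableEq α] (g : γ → α) (q : γ → ℝ) (a : α) : ℝ :=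
  ∑ c, if g c = a then q c else 0

def IsCoupling {ι β : Type*} [Fintype ι] [DecidableEq ι] [Fintype β] [DecidableEq β]
    (r : ι → β → ℝ) (q : (ι → β) → ℝ) : Prop :=
  (∀ u, 0 ≤ q u) ∧ (∑ u, q u = 1) ∧ ∀ i y, (∑ u, if u i = y then q u else 0) = r i y

section Entropy

variable {γ α : Type*} [Fintype γ] [Fintype α]

theorem shannonEntropy_comp_equiv (e : γ ≃ α) (q : α → ℝ) :
    shannonEntropy (q ∘ e) = shannonEntropy q := by
  simp only [shannonEntropy, Function.comp_apply]
  rw [e.sum_comp fun a => q a * logb 2 (q a)]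

theorem continuous_shannonEntropy : Continuous (shannonEntropy : (α → ℝ) → ℝ) := by
  have h : Continuous fun x : ℝ => x * logb 2 x := by
    simpa only [logb, mul_div_assoc] using continuous_mul_log.div_const (log 2)
  exact (continuous_finsetSum _ fun a _ => h.comp (continuous_apply a)).neg

end Entropy

section Pushforward

variable {γ α : Type*} [Fintype γ] [DecidableEq α] (g : γ → α) {q : γ → ℝ}

theorem pushforward_nonneg (hq : ∀ c, 0 ≤ q c) (a : α) : 0 ≤ pushforward g q a :=
  sum_nonneg fun c _ => ite_nonneg (hq c) le_rfl

theorem le_pushforward_apply (hq : ∀ c, 0 ≤ q c) (c : γ) : q c ≤ pushforward g q (g c) := by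
  calc q c = if g c = g c then q c else 0 := (if_pos rfl).symm
    _ ≤ pushforward g q (g c) := single_le_sum (f := fun c' => if g c' = g c then q c' else 0)
        (fun c' _ => ite_nonneg (hq c') le_rfl) (mem_univ c)

variable [Fintype α] (q)

theorem sum_mul_pushforward (h : α → ℝ) :
    ∑ a, h a * pushforward g q a = ∑ c, h (g c) * q c := by
  simp only [pushforward, mul_sum, mul_ite, mul_zero]
  rw [sum_comm]
  simp

theorem sum_ite_pushforward (P : α → Prop) [DecidablePred P] :
    ∑ a, (if P a then pushforward g q a else 0) = ∑ c, if P (g c) then q c else 0 := by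
  simpa only [boole_mul] using sum_mul_pushforward g q fun a => if P a then 1 else 0

theorem sum_pushforward : ∑ a, pushforward g q a = ∑ c, q c := by
  simpa using sum_mul_pushforward g q 1

variable {q}

theorem shannonEntropy_pushforward_le (hq : ∀ c, 0 ≤ q c) :
    shannonEntropy (pushforward g q) ≤ shannonEntropy q := by
  simp only [shannonEntropy, neg_le_neg_iff]
  calc ∑ c, q c * logb 2 (q c)
      ≤ ∑ c, logb 2 (pushforward g q (g c)) * q c := sum_le_sum fun c _ => by
        rcases (hq c).eq_or_lt with h0 | h0
        · simp [← h0]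
        · rw [mul_comm]
          gcongr
          · exact one_lt_two
          · exact le_pushforward_apply g hq c
    _ = ∑ a, logb 2 (pushforward g q a) * pushforward g q a :=
        (sum_mul_pushforward g q fun a => logb 2 (pushforward g q a)).symm
    _ = ∑ a, pushforward g q a * logb 2 (pushforward g q a) := by simp_rw [mul_comm]

end Pushforward

section Coupling

variable {ι β : Type*} [Fintype ι] [DecidableEq ι] [Fintype β] [DecidableEq β]
  {r : ι → β → ℝ}

theorem isCoupling_prod (hr0 : ∀ i y, 0 ≤ r i y) (hr1 : ∀ i, ∑ y, r i y = 1) :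
    IsCoupling r fun u => ∏ i, r i (u i) := by
  refine ⟨fun u => prod_nonneg fun i _ => hr0 i (u i), ?_, fun i y => ?_⟩
  · rw [← Fintype.prod_sum]
    simp [hr1]
  -- cutting the `i`-th factor down to `y` turns the marginal into a product of sums
  set r' : ι → β → ℝ := fun j z => if j = i then (if z = y then r i z else 0) else r j z
  have hcut : ∀ u : ι → β, (if u i = y then ∏ j, r j (u j) else 0) = ∏ j, r' j (u j) := by
    intro u
    by_cases h : u i = y
    · rw [if_pos h]
      refine prod_congr rfl fun j _ => ?_
      by_cases hj : j = i
      · subst hj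
        simp [r', h]
      · simp [r', hj]
    · rw [if_neg h]
      exact (prod_eq_zero (mem_univ i) (by simp [r', h])).symm
  rw [sum_congr rfl fun u _ => hcut u, ← Fintype.prod_sum, prod_eq_single i]
  · simp [r']
  · intro j _ hj
    simp [r', hj, hr1 j]
  · simp

theorem isCompact_setOf_isCoupling (r : ι → β → ℝ) : IsCompact {q | IsCoupling r q} := by
  have hclosed : IsClosed {q | IsCoupling r q} := by
    simp only [IsCoupling, Set.ofPred_and, Set.ofPred_forall]
    refine (isClosed_iInter fun u => isClosed_le continuous_const (continuous_apply u)).inter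
      ((isClosed_eq (by fun_prop) continuous_const).inter
        (isClosed_iInter fun i => isClosed_iInter fun y => isClosed_eq ?_ continuous_const))
    exact continuous_finsetSum _ fun u _ => by split_ifs <;> fun_prop
  refine (isCompact_Icc (a := 0) (b := 1)).of_isClosed_subset hclosed fun q ⟨hq0, hq1, _⟩ => ⟨hq0, fun u => ?_⟩
  exact (single_le_sum (fun v _ => hq0 v) (mem_univ u)).trans_eq hq1

theorem exists_isMinOn_shannonEntropy_isCoupling (hr0 : ∀ i y, 0 ≤ r i y)
    (hr1 : ∀ i, ∑ y, r i y = 1) :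
    ∃ q ∈ {q | IsCoupling r q}, IsMinOn shannonEntropy {q | IsCoupling r q} q :=
  (isCompact_setOf_isCoupling r).exists_isMinOn ⟨_, isCoupling_prod hr0 hr1⟩
    continuous_shannonEntropy.continuousOn

end Coupling

section CausalModel

variable {α β γ : Type*} [Fintype α] [DecidableEq α] [Fintype β] [DecidableEq β] [Fintype γ]
  {p : α → β → ℝ}

theorem IsCausalModel.isCoupling_pushforward {pE : γ → ℝ} {f : α → γ → β}
    (h : IsCausalModel p pE f) (hpos : ∀ x, 0 < ∑ y, p x y) :
    IsCoupling (fun x y => p x y / ∑ y', p x y') (pushforward (fun c x => f x c) pE) := by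
  refine ⟨pushforward_nonneg _ h.1, (sum_pushforward _ _).trans h.2.1, fun x y => ?_⟩
  refine (sum_ite_pushforward _ _ fun u : α → β => u x = y).trans ?_
  dsimp only
  rw [h.2.2 x y, mul_div_cancel_left₀ _ (hpos x).ne']

theorem isCausalModel_of_isCoupling (hpos : ∀ x, 0 < ∑ y, p x y) {q : (α → β) → ℝ}
    (hq : IsCoupling (fun x y => p x y / ∑ y', p x y') q) (e : γ ≃ (α → β)) :
    IsCausalModel p (q ∘ e) fun x c => e c x := by
  refine ⟨fun c => hq.1 _, (e.sum_comp q).trans hq.2.1, fun x y => ?_⟩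
  simp only [Function.comp_apply]
  rw [e.sum_comp fun u => if u x = y then q u else 0, hq.2.2, mul_div_cancel₀ _ (hpos x).ne']

end CausalModel

theorem min_entropy_causal_eq_min_entropy_coupling_general
    (n : ℕ) (p : Fin n → Fin n → ℝ)
    (hnn : ∀ x y, 0 ≤ p x y)
    (hpos : ∀ x, 0 < ∑ y, p x y) :
    ∃ h : ℝ,
      IsLeast {h' : ℝ | ∃ (m : ℕ) (pE : Fin m → ℝ) (f : Fin n → Fin m → Fin n),
        IsCausalModel p pE f ∧ h' = shannonEntropy pE} h ∧
      IsLeast {h' : ℝ | ∃ q : (Fin n → Fin n) → ℝ,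
        (∀ u, 0 ≤ q u) ∧ (∑ u, q u = 1) ∧
        (∀ i y, (∑ u, if u i = y then q u else 0) = p i y / (∑ y', p i y')) ∧
        h' = shannonEntropy q} h := by
  obtain ⟨q₀, hq₀, hmin⟩ := exists_isMinOn_shannonEntropy_isCoupling
    (fun x y => div_nonneg (hnn x y) (hpos x).le)
    (fun x => by rw [← sum_div, div_self (hpos x).ne'])
  refine ⟨shannonEntropy q₀, ⟨?_, ?_⟩, ⟨q₀, hq₀.1, hq₀.2.1, hq₀.2.2, rfl⟩, ?_⟩
  · exact ⟨_, _, _, isCausalModel_of_isCoupling hpos hq₀ (Fintype.equivFin _).symm,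
      (shannonEntropy_comp_equiv _ _).symm⟩
  · rintro _ ⟨m, pE, f, hf, rfl⟩
    exact (hmin (hf.isCoupling_pushforward hpos)).trans (shannonEntropy_pushforward_le _ hf.1)
  · rintro _ ⟨q, hq0, hq1, hq2, rfl⟩
    exact hmin ⟨hq0, hq1, hq2⟩

/-- **Minimum entropy causal model = minimum entropy coupling.**
Let `X, Y` take values in `[n]` with joint distribution `p(x,y)`, `p(X=i) > 0` for all
`i`, and let `pᵢ(y) = p(Y=y | X=i)`.  Then the minimum of the Shannon entropy `H(E)` over
all causal models `Y = f(X,E)`, `E ⟂ X`, inducing `p`, equals the minimum joint Shannon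
entropy `H(U₁, …, Uₙ)` over all couplings of the marginals `p₁, …, pₙ` (joint
distributions `q` on `[n]ⁿ` with `i`-th marginal `pᵢ` for each `i`); moreover both minima
are attained. -/
theorem min_entropy_causal_eq_min_entropy_coupling
    (n : ℕ) (p : Fin n → Fin n → ℝ)
    (hnn : ∀ x y, 0 ≤ p x y) (hsum : ∑ x, ∑ y, p x y = 1)
    (hpos : ∀ x, 0 < ∑ y, p x y) :
    ∃ h : ℝ,
      IsLeast {h' : ℝ | ∃ (m : ℕ) (pE : Fin m → ℝ) (f : Fin n → Fin m → Fin n),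
        IsCausalModel p pE f ∧ h' = shannonEntropy pE} h ∧
      IsLeast {h' : ℝ | ∃ q : (Fin n → Fin n) → ℝ,
        (∀ u, 0 ≤ q u) ∧ (∑ u, q u = 1) ∧
        (∀ i y, (∑ u, if u i = y then q u else 0) = p i y / (∑ y', p i y')) ∧
        h' = shannonEntropy q} h :=
  min_entropy_causal_eq_min_entropy_coupling_general n p hnn hpos
end

section
/- Let p₁,…,p_m be probability distributions each supported on [n]. Then there exists a coupling of p₁,…,p_m — a joint probability distribution on [n]^m whose i-th marginal is pᵢ for every i — whose support has cardinality at most m(n−1)+1; consequently its Shannon entropy is at most log₂(m(n−1)+1) ≤ log₂ m + log₂ n. In particular, the greedy joint entropy minimization algorithm outputs a coupling with entropy at most log₂ m + log₂ n. -/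
open MeasureTheory

/-- Jensen: the Shannon entropy of a distribution is at most log₂ of its support size. -/
lemma shannonEntropy_le_logb_card {α : Type*} [Fintype α] (q : α → ℝ)
    (h0 : ∀ u, 0 ≤ q u) (h1 : ∑ u, q u = 1) :
    shannonEntropy q ≤
      Real.logb 2 (((Finset.univ.filter fun u => q u ≠ 0).card : ℕ) : ℝ) := by
  classical
  set s : Finset α := Finset.univ.filter fun u => q u ≠ 0 with hs
  have hqpos : ∀ u ∈ s, 0 < q u := by
    intro u hu
    rcases (Finset.mem_filter.1 hu) with ⟨-, hne⟩
    exact lt_of_le_of_ne (h0 u) (Ne.symm hne)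
  have hsum_s : ∑ u ∈ s, q u = 1 := by
    rw [hs, Finset.sum_filter_ne_zero]; exact h1
  have jensen := (strictConcaveOn_log_Ioi.concaveOn).le_map_sum
    (t := s) (w := q) (p := fun u => (q u)⁻¹)
    (fun u _ => h0 u) hsum_s
    (fun u hu => Set.mem_Ioi.2 (inv_pos.2 (hqpos u hu)))
  have hrhs : ∑ u ∈ s, q u • (q u)⁻¹ = (s.card : ℝ) := by
    rw [Finset.sum_congr rfl (fun u hu => ?_), Finset.sum_const, nsmul_eq_mul, mul_one]
    · exact mul_inv_cancel₀ (hqpos u hu).ne'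
  have hH : shannonEntropy q = (∑ u ∈ s, q u * Real.log ((q u)⁻¹)) / Real.log 2 := by
    unfold shannonEntropy
    have hsub : ∑ u, q u * Real.logb 2 (q u) = ∑ u ∈ s, q u * Real.logb 2 (q u) := by
      refine (Finset.sum_subset (Finset.filter_subset _ _) ?_).symm
      intro u _ hu
      have : q u = 0 := by simpa [hs] using hu
      simp [this]
    rw [hsub, Finset.sum_div, ← Finset.sum_neg_distrib]
    refine Finset.sum_congr rfl fun u _ => ?_
    rw [Real.log_inv, Real.logb]
    ring
  rw [hH]
  have hlog2 : (0:ℝ) < Real.log 2 := Real.log_pos (by norm_num)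
  have : (∑ u ∈ s, q u * Real.log ((q u)⁻¹)) ≤ Real.log (s.card : ℝ) := by
    calc ∑ u ∈ s, q u * Real.log ((q u)⁻¹)
        = ∑ u ∈ s, q u • Real.log ((q u)⁻¹) := by simp [smul_eq_mul]
      _ ≤ Real.log (∑ u ∈ s, q u • (q u)⁻¹) := jensen
      _ = Real.log (s.card : ℝ) := by rw [hrhs]
  calc (∑ u ∈ s, q u * Real.log ((q u)⁻¹)) / Real.log 2
      ≤ Real.log (s.card : ℝ) / Real.log 2 := by
        exact div_le_div_of_nonneg_right this hlog2.le
    _ = Real.logb 2 ((s.card : ℕ) : ℝ) := by rw [Real.logb]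

/-- **Small-support couplings exist (greedy entropy minimization upper bound).**
Let `p₁, …, p_m` be probability distributions on `[n]`.  Then there is a coupling of
`p₁, …, p_m` — a joint distribution `q` on `[n]^m` whose `i`-th marginal is `pᵢ` for every
`i` — whose support has cardinality at most `m(n-1) + 1`; consequently its Shannon entropy
is at most `log₂(m(n-1)+1) ≤ log₂ m + log₂ n`.  (In particular the greedy joint entropy
minimization algorithm outputs such a coupling, with entropy at most
`log₂ m + log₂ n`.) -/
theorem exists_small_support_coupling
    (m n : ℕ) (hm : 0 < m) (hn : 0 < n)
    (p : Fin m → Fin n → ℝ)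
    (hnn : ∀ i y, 0 ≤ p i y) (hsum : ∀ i, ∑ y, p i y = 1) :
    ∃ q : (Fin m → Fin n) → ℝ,
      (∀ u, 0 ≤ q u) ∧ (∑ u, q u = 1) ∧
      (∀ i y, (∑ u, if u i = y then q u else 0) = p i y) ∧
      (Finset.univ.filter fun u => q u ≠ 0).card ≤ m * (n - 1) + 1 ∧
      shannonEntropy q ≤ Real.logb 2 ((m * (n - 1) + 1 : ℕ) : ℝ) ∧
      Real.logb 2 ((m * (n - 1) + 1 : ℕ) : ℝ) ≤
        Real.logb 2 (m : ℝ) + Real.logb 2 (n : ℝ) := by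
  classical
  haveI : NeZero n := ⟨hn.ne'⟩
  haveI : NeZero m := ⟨hm.ne'⟩
  -- cumulative distribution functions
  set cF : Fin m → ℕ → ℝ :=
    fun i k => ∑ z ∈ Finset.univ.filter (fun z : Fin n => (z : ℕ) < k), p i z with hcF
  have hcF0 : ∀ i, cF i 0 = 0 := by intro i; simp [hcF]
  have hcFn : ∀ i, cF i n = 1 := by
    intro i
    have : Finset.univ.filter (fun z : Fin n => (z : ℕ) < n) = Finset.univ := by
      ext z; simp [z.isLt]
    rw [hcF]; simp only [this]; exact hsum i
  have hcFmono : ∀ i {k l : ℕ}, k ≤ l → cF i k ≤ cF i l := by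
    intro i k l hkl
    apply Finset.sum_le_sum_of_subset_of_nonneg
    · intro z hz
      simp only [Finset.mem_filter, Finset.mem_univ, true_and] at hz ⊢
      omega
    · intro z _ _; exact hnn i z
  have hcFnonneg : ∀ i k, 0 ≤ cF i k := fun i k =>
    Finset.sum_nonneg fun z _ => hnn i z
  have hstep : ∀ i (y : Fin n), cF i ((y : ℕ) + 1) = cF i (y : ℕ) + p i y := by
    intro i y
    have hfil : Finset.univ.filter (fun z : Fin n => (z : ℕ) < (y : ℕ) + 1)
        = insert y (Finset.univ.filter (fun z : Fin n => (z : ℕ) < (y : ℕ))) := by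
      ext z
      simp only [Finset.mem_filter, Finset.mem_insert, Finset.mem_univ, true_and, Fin.ext_iff]
      omega
    rw [hcF]
    simp only [hfil]
    rw [Finset.sum_insert (by simp)]
    ring
  -- cells
  have hmne : (Finset.univ : Finset (Fin m)).Nonempty := Finset.univ_nonempty
  set a : (Fin m → Fin n) → ℝ :=
    fun u => Finset.univ.sup' hmne fun i => cF i (u i) with ha
  set b : (Fin m → Fin n) → ℝ :=
    fun u => Finset.univ.inf' hmne fun i => cF i ((u i : ℕ) + 1) with hb
  set A : (Fin m → Fin n) → Set ℝ := fun u => Set.Ico (a u) (b u) with hA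
  have hmemA : ∀ u x, x ∈ A u ↔ ∀ i, cF i (u i) ≤ x ∧ x < cF i ((u i : ℕ) + 1) := by
    intro u x
    constructor
    · rintro ⟨h1, h2⟩ i
      exact ⟨le_trans (Finset.le_sup' (fun i => cF i (u i)) (Finset.mem_univ i)) h1,
        lt_of_lt_of_le h2 (Finset.inf'_le _ (Finset.mem_univ i))⟩
    · intro h
      exact ⟨(Finset.sup'_le_iff hmne _).2 fun i _ => (h i).1,
        (Finset.lt_inf'_iff hmne).2 fun i _ => (h i).2⟩
  -- disjointness
  have hdisj : ∀ u v, u ≠ v → Disjoint (A u) (A v) := by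
    intro u v huv
    rw [Set.disjoint_left]
    intro x hxu hxv
    have hne : ∃ i, u i ≠ v i := by
      by_contra h
      push_neg at h
      exact huv (funext h)
    obtain ⟨i, hi⟩ := hne
    have h1 := (hmemA u x).1 hxu i
    have h2 := (hmemA v x).1 hxv i
    rcases lt_or_gt_of_ne (fun h : (u i : ℕ) = (v i : ℕ) => hi (Fin.ext h)) with hlt | hlt
    · exact absurd (lt_of_lt_of_le h1.2 (le_trans (hcFmono i hlt) h2.1)) (lt_irrefl x)
    · exact absurd (lt_of_lt_of_le h2.2 (le_trans (hcFmono i hlt) h1.1)) (lt_irrefl x)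
  -- existence of a cell containing a point of [0,1)
  have hexists : ∀ x : ℝ, 0 ≤ x → x < 1 → ∃ u, x ∈ A u := by
    intro x hx0 hx1
    have hS : ∀ i : Fin m,
        ((Finset.univ.filter fun y : Fin n => cF i (y : ℕ) ≤ x)).Nonempty := by
      intro i
      exact ⟨0, Finset.mem_filter.2 ⟨Finset.mem_univ _, by
        simp only [Fin.val_zero]; rw [hcF0]; exact hx0⟩⟩
    refine ⟨fun i => (Finset.univ.filter fun y : Fin n => cF i (y : ℕ) ≤ x).max' (hS i), ?_⟩
    rw [hmemA]
    intro i
    set yi := (Finset.univ.filter fun y : Fin n => cF i (y : ℕ) ≤ x).max' (hS i) with hyi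
    have hyi_mem := Finset.max'_mem _ (hS i)
    rw [← hyi] at hyi_mem
    have h1 : cF i (yi : ℕ) ≤ x := (Finset.mem_filter.1 hyi_mem).2
    refine ⟨h1, ?_⟩
    by_contra hcon
    push_neg at hcon
    have hcase : (yi : ℕ) + 1 < n ∨ (yi : ℕ) + 1 = n := by
      have := yi.isLt; omega
    rcases hcase with hlt | heq
    · set y' : Fin n := ⟨(yi : ℕ) + 1, hlt⟩ with hy'
      have hy'mem : y' ∈ Finset.univ.filter fun y : Fin n => cF i (y : ℕ) ≤ x :=
        Finset.mem_filter.2 ⟨Finset.mem_univ _, hcon⟩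
      have := Finset.le_max' _ y' hy'mem
      rw [← hyi] at this
      have : (y' : ℕ) ≤ (yi : ℕ) := this
      simp [hy'] at this
    · rw [heq, hcFn] at hcon
      linarith
  -- marginal unions
  have hunion : ∀ (i : Fin m) (y : Fin n),
      (⋃ u ∈ Finset.univ.filter (fun u : Fin m → Fin n => u i = y), A u)
        = Set.Ico (cF i (y : ℕ)) (cF i ((y : ℕ) + 1)) := by
    intro i y
    ext x
    simp only [Set.mem_iUnion, Finset.mem_filter, Finset.mem_univ, true_and, Set.mem_Ico]
    constructor
    · rintro ⟨u, hui, hx⟩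
      have := (hmemA u x).1 hx i
      rw [hui] at this
      exact this
    · rintro ⟨hl, hr⟩
      have hx0 : 0 ≤ x := le_trans (by rw [← hcF0 i]; exact hcFmono i (Nat.zero_le _)) hl
      have hx1 : x < 1 := lt_of_lt_of_le hr (by rw [← hcFn i]; exact hcFmono i y.isLt)
      obtain ⟨u, hu⟩ := hexists x hx0 hx1
      refine ⟨u, ?_, hu⟩
      have h1 := (hmemA u x).1 hu i
      by_contra hne
      rcases lt_or_gt_of_ne (fun h : (u i : ℕ) = (y : ℕ) => hne (Fin.ext h)) with hlt | hlt
      · exact absurd (lt_of_lt_of_le h1.2 (le_trans (hcFmono i hlt) hl)) (lt_irrefl x)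
      · exact absurd (lt_of_lt_of_le hr (le_trans (hcFmono i hlt) h1.1)) (lt_irrefl x)
  -- the coupling
  set q : (Fin m → Fin n) → ℝ := fun u => (volume (A u)).toReal with hq
  have hAfin : ∀ u, volume (A u) ≠ ⊤ := by
    intro u; rw [hA]; exact measure_Ico_lt_top.ne
  have hq0 : ∀ u, 0 ≤ q u := fun u => ENNReal.toReal_nonneg
  -- marginals
  have hmarg : ∀ i y, (∑ u, if u i = y then q u else 0) = p i y := by
    intro i y
    rw [← Finset.sum_filter]
    have hmeas : ∀ u ∈ Finset.univ.filter (fun u : Fin m → Fin n => u i = y),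
        MeasurableSet (A u) := fun u _ => measurableSet_Ico
    have hpd : Set.PairwiseDisjoint
        (↑(Finset.univ.filter (fun u : Fin m → Fin n => u i = y))) A :=
      fun u _ v _ huv => hdisj u v huv
    calc ∑ u ∈ Finset.univ.filter (fun u : Fin m → Fin n => u i = y), q u
        = (∑ u ∈ Finset.univ.filter (fun u : Fin m → Fin n => u i = y),
            volume (A u)).toReal := (ENNReal.toReal_sum fun u _ => hAfin u).symm
      _ = (volume (⋃ u ∈ Finset.univ.filter (fun u : Fin m → Fin n => u i = y),
            A u)).toReal := by rw [measure_biUnion_finset hpd hmeas]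
      _ = (volume (Set.Ico (cF i (y : ℕ)) (cF i ((y : ℕ) + 1)))).toReal := by
            rw [hunion]
      _ = p i y := by
            rw [Real.volume_Ico, hstep i y, add_sub_cancel_left,
              ENNReal.toReal_ofReal (hnn i y)]
  -- total mass
  have htot : ∑ u, q u = 1 := by
    set i₀ : Fin m := ⟨0, hm⟩
    calc ∑ u, q u = ∑ u, ∑ y, if u i₀ = y then q u else 0 := by
          refine Finset.sum_congr rfl fun u _ => ?_
          simp
      _ = ∑ y, ∑ u, if u i₀ = y then q u else 0 := Finset.sum_comm
      _ = ∑ y, p i₀ y := Finset.sum_congr rfl fun y _ => hmarg i₀ y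
      _ = 1 := hsum i₀
  -- support bound
  set T : Finset ℝ := insert 0
    (((Finset.univ : Finset (Fin m)) ×ˢ (Finset.univ.filter fun y : Fin n => y ≠ 0)).image
      fun iy => cF iy.1 (iy.2 : ℕ)) with hT
  have hcard_le : (Finset.univ.filter fun u => q u ≠ 0).card ≤ m * (n - 1) + 1 := by
    have hmaps : ∀ u ∈ Finset.univ.filter (fun u => q u ≠ 0), a u ∈ T := by
      intro u _
      obtain ⟨i, -, hi⟩ := Finset.exists_mem_eq_sup' hmne fun i => cF i (u i)
      rw [hT]
      by_cases h0 : u i = 0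
      · have : a u = 0 := by rw [ha]; simp only [← ha]; rw [hi, h0]; simp [hcF0]
        rw [this]; exact Finset.mem_insert_self 0 _
      · refine Finset.mem_insert_of_mem (Finset.mem_image.2 ⟨⟨i, u i⟩, ?_, ?_⟩)
        · exact Finset.mem_product.2 ⟨Finset.mem_univ _,
            Finset.mem_filter.2 ⟨Finset.mem_univ _, h0⟩⟩
        · exact hi.symm
    have hAne : ∀ u, q u ≠ 0 → a u ∈ A u := by
      intro u hqu
      have hlt : a u < b u := by
        by_contra hcon
        push_neg at hcon
        have : A u = ∅ := by rw [hA]; exact Set.Ico_eq_empty (not_lt.2 hcon)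
        rw [hq] at hqu
        simp only at hqu
        rw [this] at hqu
        simp at hqu
      exact Set.mem_Ico.2 ⟨le_refl _, hlt⟩
    have hinj : Set.InjOn a ↑(Finset.univ.filter fun u => q u ≠ 0) := by
      intro u hu v hv hav
      by_contra hne
      have h1 := hAne u (by simpa using hu)
      have h2 := hAne v (by simpa using hv)
      rw [hav] at h1
      exact (Set.disjoint_left.1 (hdisj u v hne)) h1 h2
    calc (Finset.univ.filter fun u => q u ≠ 0).card
        ≤ T.card := Finset.card_le_card_of_injOn a hmaps hinj
      _ ≤ m * (n - 1) + 1 := by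
          rw [hT]
          refine le_trans (Finset.card_insert_le _ _) ?_
          have hfc : (Finset.univ.filter fun y : Fin n => y ≠ 0).card = n - 1 := by
            rw [Finset.filter_ne', Finset.card_erase_of_mem (Finset.mem_univ _),
              Finset.card_univ, Fintype.card_fin]
          have himg := le_trans (Finset.card_image_le
            (s := (Finset.univ : Finset (Fin m)) ×ˢ (Finset.univ.filter fun y : Fin n => y ≠ 0))
            (f := fun iy => cF iy.1 (iy.2 : ℕ)))
            (le_of_eq (by rw [Finset.card_product, Finset.card_univ, Fintype.card_fin, hfc]))
          omega
  -- entropy bounds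
  have hcard_pos : (1 : ℕ) ≤ m * (n - 1) + 1 := Nat.le_add_left 1 _
  have hent : shannonEntropy q ≤ Real.logb 2 ((m * (n - 1) + 1 : ℕ) : ℝ) := by
    refine le_trans (shannonEntropy_le_logb_card q hq0 htot) ?_
    by_cases hc : (Finset.univ.filter fun u => q u ≠ 0).card = 0
    · rw [hc]
      simp only [Nat.cast_zero, Real.logb_zero]
      apply Real.logb_nonneg (by norm_num)
      exact_mod_cast hcard_pos
    · apply Real.logb_le_logb_of_le (by norm_num : (1:ℝ) < 2)
      · exact_mod_cast Nat.pos_of_ne_zero hc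
      · exact_mod_cast hcard_le
  have hfin2 : Real.logb 2 ((m * (n - 1) + 1 : ℕ) : ℝ) ≤
      Real.logb 2 (m : ℝ) + Real.logb 2 (n : ℝ) := by
    have hle : m * (n - 1) + 1 ≤ m * n := by
      have h1 : n - 1 + 1 = n := Nat.succ_pred_eq_of_pos hn
      calc m * (n - 1) + 1 ≤ m * (n - 1) + m := by omega
        _ = m * ((n - 1) + 1) := by ring
        _ = m * n := by rw [h1]
    calc Real.logb 2 ((m * (n - 1) + 1 : ℕ) : ℝ)
        ≤ Real.logb 2 ((m * n : ℕ) : ℝ) := by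
          apply Real.logb_le_logb_of_le (by norm_num : (1:ℝ) < 2)
          · exact_mod_cast hcard_pos
          · exact_mod_cast hle
      _ = Real.logb 2 (m : ℝ) + Real.logb 2 (n : ℝ) := by
          rw [Nat.cast_mul]
          exact Real.logb_mul (by exact_mod_cast hm.ne') (by exact_mod_cast hn.ne')
  exact ⟨q, hq0, htot, hmarg, hcard_le, hent, hfin2⟩
end

section
/- Let M be an n×n matrix with nonnegative entries whose support graph — the bipartite graph on vertex sets [n] ⊔ [n] with an edge (i,j) whenever M(i,j) ≠ 0 — contains no cycle. Then there exist vectors u, v ∈ ℝⁿ such that M(i,j) = uᵢ vⱼ for every (i,j) with M(i,j) ≠ 0; that is, M is a masked submatrix of the rank-1 matrix uv^T. -/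
/-- The bipartite support graph of an `n × n` matrix `M`: left vertices are the rows,
right vertices are the columns, and row `i` is adjacent to column `j` exactly when
`M i j ≠ 0`. -/
def supportGraph (n : ℕ) (M : Fin n → Fin n → ℝ) : SimpleGraph (Fin n ⊕ Fin n) where
  Adj a b :=
    (∃ i j, a = Sum.inl i ∧ b = Sum.inr j ∧ M i j ≠ 0) ∨
    (∃ i j, a = Sum.inr j ∧ b = Sum.inl i ∧ M i j ≠ 0)
  symm := by
    constructor
    rintro a b (⟨i, j, rfl, rfl, h⟩ | ⟨i, j, rfl, rfl, h⟩)
    · exact Or.inr ⟨i, j, rfl, rfl, h⟩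
    · exact Or.inl ⟨i, j, rfl, rfl, h⟩
  loopless := by
    constructor
    rintro a (⟨i, j, rfl, hb, h⟩ | ⟨i, j, rfl, hb, h⟩) <;> simp at hb

/-!
Label the edge from row `i` to column `j` of the support graph by `M i j` and the reverse edge
by its inverse. On a finite forest every such label is of the form `φ x / φ y`: delete an edge,
which is a bridge, solve on the smaller forest, and multiply `φ` by a constant on the component
of one endpoint to fit the deleted edge. Then `u i = φ (row i)` and `v j = (φ (column j))⁻¹`.
-/

namespace SimpleGraph

variable {V α : Type*} [CommGroup α] {G : SimpleGraph V}

theorem IsBridge.exists_eq_div {a b : V} (hbr : G.IsBridge s(a, b)) (w : V → V → α)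
    (hw : w b a = (w a b)⁻¹) {φ : V → α}
    (hφ : ∀ x y, (G.deleteEdges {s(a, b)}).Adj x y → w x y = φ x / φ y) :
    ∃ φ' : V → α, ∀ x y, G.Adj x y → w x y = φ' x / φ' y := by
  classical
  set H := G.deleteEdges {s(a, b)}
  have hnreach : ¬H.Reachable a b := isBridge_iff.mp hbr
  let c := w a b * φ b / φ a
  refine ⟨fun x => φ x * if H.Reachable a x then c else 1, fun x y hxy => ?_⟩
  by_cases he : s(x, y) = s(a, b)
  · have hφa : φ a * c = w a b * φ b := mul_div_cancel _ _
    rcases Sym2.eq_iff.mp he with ⟨rfl, rfl⟩ | ⟨rfl, rfl⟩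
    · simp [hnreach, hφa]
    · simp [hnreach, hφa, hw]
  · have hH : H.Adj x y := (deleteEdges_adj ..).mpr ⟨hxy, he⟩
    have hreach : H.Reachable a x ↔ H.Reachable a y :=
      ⟨(·.trans hH.reachable), (·.trans hH.symm.reachable)⟩
    simp only [hreach, mul_div_mul_right_eq_div, hφ x y hH]

theorem IsAcyclic.exists_eq_div [Finite V] (hG : G.IsAcyclic) (w : V → V → α)
    (hw : ∀ x y, G.Adj x y → w y x = (w x y)⁻¹) :
    ∃ φ : V → α, ∀ x y, G.Adj x y → w x y = φ x / φ y := by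
  induction G using WellFoundedLT.induction with
  | _ G ih =>
  by_cases hbot : G = ⊥
  · exact ⟨1, fun x y hxy => by simp [hbot] at hxy⟩
  obtain ⟨a, b, hab⟩ := ne_bot_iff_exists_adj.mp hbot
  have hlt : G.deleteEdges {s(a, b)} < G :=
    (deleteEdges_le _).lt_of_ne <| deleteEdges_eq_self.not.mpr <|
      Set.not_disjoint_iff.mpr ⟨_, hab, rfl⟩
  obtain ⟨φ, hφ⟩ := ih _ hlt (hG.anti (deleteEdges_le _))
    fun x y hxy => hw x y ((deleteEdges_le _) hxy)
  exact (isAcyclic_iff_forall_adj_isBridge.mp hG hab).exists_eq_div w (hw a b hab) hφ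

end SimpleGraph

/-- Off the support of `M` the value `1` is a placeholder. -/
noncomputable def supportCocycle {n : ℕ} (M : Fin n → Fin n → ℝ) :
    Fin n ⊕ Fin n → Fin n ⊕ Fin n → ℝˣ
  | .inl i, .inr j => entry i j
  | .inr j, .inl i => (entry i j)⁻¹
  | _, _ => 1
where
  entry (i j : Fin n) : ℝˣ := if h : M i j = 0 then 1 else Units.mk0 (M i j) h

theorem supportCocycle_swap {n : ℕ} (M : Fin n → Fin n → ℝ) (a b : Fin n ⊕ Fin n) :
    supportCocycle M b a = (supportCocycle M a b)⁻¹ := by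
  rcases a with i | i <;> rcases b with j | j <;> simp [supportCocycle]

theorem val_supportCocycle_inl_inr {n : ℕ} {M : Fin n → Fin n → ℝ} {i j : Fin n}
    (h : M i j ≠ 0) : (supportCocycle M (.inl i) (.inr j) : ℝ) = M i j := by
  simp [supportCocycle, supportCocycle.entry, h]

theorem acyclic_support_masked_rank_one_general
    (n : ℕ) (M : Fin n → Fin n → ℝ)
    (hac : (supportGraph n M).IsAcyclic) :
    ∃ u v : Fin n → ℝ, ∀ i j, M i j ≠ 0 → M i j = u i * v j := by
  obtain ⟨φ, hφ⟩ := hac.exists_eq_div (supportCocycle M) fun a b _ => supportCocycle_swap M a b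
  refine ⟨fun i => φ (.inl i), fun j => ↑(φ (.inr j))⁻¹, fun i j hij => ?_⟩
  rw [← val_supportCocycle_inl_inr hij, hφ _ _ (Or.inl ⟨i, j, rfl, rfl, hij⟩), div_eq_mul_inv,
    Units.val_mul]

/-- **Acyclic-support nonnegative matrices are masked submatrices of rank-1 matrices.**
Let `M` be an `n × n` matrix with nonnegative entries whose bipartite support graph
contains no cycle.  Then there are vectors `u, v ∈ ℝⁿ` with `M i j = uᵢ vⱼ` for every
`(i,j)` with `M i j ≠ 0`; that is, `M` agrees with the rank-1 matrix `u vᵀ` on its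
support. -/
theorem acyclic_support_masked_rank_one
    (n : ℕ) (M : Fin n → Fin n → ℝ)
    (hnn : ∀ i j, 0 ≤ M i j)
    (hac : (supportGraph n M).IsAcyclic) :
    ∃ u v : Fin n → ℝ, ∀ i j, M i j ≠ 0 → M i j = u i * v j :=
  acyclic_support_masked_rank_one_general n M hac
end
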